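/- arXiv:solv-int/9905010 — 9 statements merged into one kernel-verified Lean document; each statement's English description precedes it below -/
import Mathlib

section
/- Let (uₙ)_{n≥0} be a sequence of real polynomials in x, all of whose coefficients are nonnegative, satisfying the recursion (n+1) u_{n+1} = Σ_{k=0}^{n} u_k · u'_{n−k} + u'''_n for every n ≥ 0 (where ' denotes d/dx). Suppose u₀ has degree d₀ ≥ 2. Then for every n ≥ 0, the degree dₙ of uₙ equals (n+1) d₀ − n. -/
/-!
Nonnegative coefficients rule out cancellation of leading coefficients in `∑ₖ uₖ u'ₙ₋ₖ`,
so its degree is that of its summands, `dₖ + dₙ₋ₖ - 1`, while `u'''ₙ` has lower degree.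
By strong induction `dₙ = (n + 1)(d₀ - 1) + 1`, which makes `dₖ + dₙ₋ₖ - 1` independent of `k`.
-/

open Finset

namespace Polynomial

section CoeffNonneg

variable {R : Type*} [Semiring R] [PartialOrder R] [IsOrderedRing R] {p q : R[X]}

theorem coeff_mul_nonneg (hp : ∀ k, 0 ≤ p.coeff k) (hq : ∀ k, 0 ≤ q.coeff k) (n : ℕ) :
    0 ≤ (p * q).coeff n := by
  rw [coeff_mul]
  exact sum_nonneg fun x _ => mul_nonneg (hp x.1) (hq x.2)

theorem coeff_derivative_nonneg (hp : ∀ k, 0 ≤ p.coeff k) (n : ℕ) :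
    0 ≤ (derivative p).coeff n := by
  rw [coeff_derivative]
  exact mul_nonneg (hp _) (add_nonneg n.cast_nonneg zero_le_one)

theorem natDegree_le_natDegree_add_of_coeff_nonneg (hp : ∀ k, 0 ≤ p.coeff k)
    (hq : ∀ k, 0 ≤ q.coeff k) : p.natDegree ≤ (p + q).natDegree := by
  rcases eq_or_ne p 0 with rfl | hp0
  · simp
  refine le_natDegree_of_ne_zero fun h => hp0 ?_
  rw [coeff_add, add_eq_zero_iff_of_nonneg (hp _) (hq _)] at h
  exact leadingCoeff_eq_zero.mp h.1

theorem natDegree_add_of_coeff_nonneg (hp : ∀ k, 0 ≤ p.coeff k) (hq : ∀ k, 0 ≤ q.coeff k) :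
    (p + q).natDegree = p.natDegree ⊔ q.natDegree :=
  le_antisymm (natDegree_add_le p q) <| sup_le (natDegree_le_natDegree_add_of_coeff_nonneg hp hq)
    (add_comm p q ▸ natDegree_le_natDegree_add_of_coeff_nonneg hq hp)

theorem natDegree_sum_of_coeff_nonneg {ι : Type*} (s : Finset ι) (f : ι → R[X])
    (hf : ∀ i ∈ s, ∀ k, 0 ≤ (f i).coeff k) :
    (∑ i ∈ s, f i).natDegree = s.sup fun i => (f i).natDegree := by
  classical
  induction s using Finset.induction_on with
  | empty => simp
  | insert a s ha ih =>
    have hs : ∀ i ∈ s, ∀ k, 0 ≤ (f i).coeff k := fun i hi => hf i (mem_insert_of_mem hi)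
    have hsum : ∀ k, 0 ≤ (∑ i ∈ s, f i).coeff k := fun k => by
      rw [finsetSum_coeff]
      exact sum_nonneg fun i hi => hs i hi k
    rw [sum_insert ha, sup_insert, natDegree_add_of_coeff_nonneg (hf a (mem_insert_self a s)) hsum,
      ih hs]

end CoeffNonneg

end Polynomial

open Polynomial

section KdV

variable {R : Type*} [Field R] [LinearOrder R] [IsStrictOrderedRing R]

theorem natDegree_succ_of_kdv_recursion (u : ℕ → R[X]) (hnonneg : ∀ n k, 0 ≤ (u n).coeff k)
    (n : ℕ) (hrec : ((n : R) + 1) • u (n + 1) = ∑ k ∈ range (n + 1), u k * derivative (u (n - k))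
      + derivative (derivative (derivative (u n))))
    (c : ℕ) (hdeg : ∀ k ≤ n, (u k).natDegree = (k + 1) * c + 1) :
    (u (n + 1)).natDegree = (n + 2) * c + 1 := by
  have hterm : ∀ k ∈ range (n + 1),
      (u k * derivative (u (n - k))).natDegree = (n + 2) * c + 1 := by
    intro k hk
    obtain ⟨m, rfl⟩ := Nat.exists_eq_add_of_le (mem_range_succ_iff.mp hk)
    have hk := hdeg k (Nat.le_add_right k m)
    have hm := hdeg m (Nat.le_add_left m k)
    rw [Nat.add_sub_cancel_left, natDegree_mul (ne_zero_of_natDegree_gt (n := 0) (by omega))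
      (derivative_ne_zero.mpr (by omega)), natDegree_derivative, hk, hm]
    simp only [Nat.add_sub_cancel]
    ring
  have hsum : (∑ k ∈ range (n + 1), u k * derivative (u (n - k))).natDegree
      = (n + 2) * c + 1 := by
    rw [natDegree_sum_of_coeff_nonneg _ _
        fun k _ => coeff_mul_nonneg (hnonneg k) (coeff_derivative_nonneg (hnonneg (n - k))),
      sup_congr rfl hterm, sup_const nonempty_range_add_one]
  have hthird : (derivative (derivative (derivative (u n)))).natDegree < (n + 2) * c + 1 := by
    have : (n + 2) * c = (n + 1) * c + c := by ring
    simp only [natDegree_derivative, hdeg n le_rfl]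
    omega
  rw [← natDegree_smul (u (n + 1)) (a := (n : R) + 1) (by positivity), hrec,
    natDegree_add_eq_left_of_natDegree_lt (hsum ▸ hthird), hsum]

end KdV

/-- **Degree growth for the KdV recursion (part of Lemma 2.1).**
If `(uₙ)` are real polynomials with nonnegative coefficients satisfying
`(n+1) u_{n+1} = ∑_{k=0}^{n} u_k u'_{n-k} + u'''_n`, and `deg u₀ = d₀ ≥ 2`,
then `deg uₙ = (n+1) d₀ - n` for every `n`. -/
theorem kdv_recursion_degree
    (u : ℕ → Polynomial ℝ)
    (hnonneg : ∀ n k, 0 ≤ (u n).coeff k)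
    (hrec : ∀ n : ℕ, ((n : ℝ) + 1) • u (n + 1) =
      ∑ k ∈ Finset.range (n + 1), u k * Polynomial.derivative (u (n - k))
        + Polynomial.derivative (Polynomial.derivative (Polynomial.derivative (u n))))
    (d₀ : ℕ) (hd₀ : 2 ≤ d₀) (hdeg : (u 0).natDegree = d₀) :
    ∀ n : ℕ, (u n).natDegree = (n + 1) * d₀ - n := by
  obtain ⟨c, rfl⟩ : ∃ c, d₀ = c + 1 := ⟨d₀ - 1, by omega⟩
  have hdeg_all : ∀ n, (u n).natDegree = (n + 1) * c + 1 := by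
    intro n
    induction n using Nat.strong_induction_on with
    | _ n ih =>
      cases n with
      | zero => simpa using hdeg
      | succ n =>
        exact natDegree_succ_of_kdv_recursion u hnonneg n (hrec n) c fun k hk => ih k (by omega)
  intro n
  rw [hdeg_all n, Nat.mul_succ]
  omega
end

section
/- Let (uₙ)_{n≥0} be a sequence of real polynomials in x, all of whose coefficients are nonnegative, satisfying the recursion (n+1) u_{n+1} = Σ_{k=0}^{n} u_k · u'_{n−k} + u'''_n for every n ≥ 0 (where ' denotes d/dx). Suppose u₀ has degree d₀ ≥ 2 and its leading coefficient c_{0,0} satisfies c_{0,0} > ε for some 0 < ε < 1. Then for every n ≥ 0, the leading coefficient c_{n,0} of uₙ satisfies c_{n,0} > ε^{n+1}. -/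
open Polynomial Finset


/-- **Leading-coefficient growth for the KdV recursion (part of Lemma 2.1).**
If `(uₙ)` are real polynomials with nonnegative coefficients satisfying
`(n+1) u_{n+1} = ∑_{k=0}^{n} u_k u'_{n-k} + u'''_n`, `deg u₀ = d₀ ≥ 2`, and the
leading coefficient of `u₀` exceeds `ε` for some `0 < ε < 1`, then the leading
coefficient of `uₙ` exceeds `ε^{n+1}` for every `n`. -/
theorem kdv_recursion_leadingCoeff
    (u : ℕ → Polynomial ℝ)
    (hnonneg : ∀ n k, 0 ≤ (u n).coeff k)
    (hrec : ∀ n : ℕ, ((n : ℝ) + 1) • u (n + 1) =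
      ∑ k ∈ Finset.range (n + 1), u k * Polynomial.derivative (u (n - k))
        + Polynomial.derivative (Polynomial.derivative (Polynomial.derivative (u n))))
    (d₀ : ℕ) (hd₀ : 2 ≤ d₀) (hdeg : (u 0).natDegree = d₀)
    (ε : ℝ) (hε0 : 0 < ε) (hε1 : ε < 1)
    (hlead : ε < (u 0).leadingCoeff) :
    ∀ n : ℕ, ε ^ (n + 1) < (u n).leadingCoeff := by
  set e := d₀ - 1 with he_def
  have he : 1 ≤ e := by omega
  have hderiv_nonneg : ∀ m j, 0 ≤ (Polynomial.derivative (u m)).coeff j := by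
    intro m j
    rw [Polynomial.coeff_derivative]
    have := hnonneg m (j + 1)
    positivity
  have key : ∀ n, ∀ k ≤ n,
      (u k).natDegree = d₀ + k * e ∧ ε ^ (k + 1) < (u k).leadingCoeff := by
    intro n
    induction n with
    | zero =>
      intro k hk
      obtain rfl : k = 0 := Nat.le_zero.mp hk
      constructor
      · simpa using hdeg
      · simpa using hlead
    | succ n ih =>
      intro k hk
      rcases Nat.lt_succ_iff_lt_or_eq.mp (Nat.lt_succ_of_le hk) with h | rfl
      · exact ih k (Nat.lt_succ_iff.mp h)
      -- main step: k = n + 1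
      set D := d₀ + (n + 1) * e with hD
      -- each product term has big coefficient at D
      have hterm : ∀ k ∈ Finset.range (n + 1),
          ε ^ (n + 2) < (u k * Polynomial.derivative (u (n - k))).coeff D := by
        intro k hk'
        have hk : k ≤ n := Nat.lt_succ_iff.mp (Finset.mem_range.mp hk')
        have hkn : n - k ≤ n := Nat.sub_le n k
        obtain ⟨hdk, hlk⟩ := ih k hk
        obtain ⟨hdm, hlm⟩ := ih (n - k) hkn
        set a := d₀ + k * e with ha_def
        set b := d₀ + (n - k) * e - 1 with hb_def
        have hsum : k * e + (n - k) * e = n * e := by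
          rw [← add_mul, Nat.add_sub_cancel' hk]
        have hne : (n + 1) * e = n * e + e := by ring
        have hab : a + b = D := by omega
        have hb1 : b + 1 = (u (n - k)).natDegree := by omega
        have hcoef : (u k).coeff a * (Polynomial.derivative (u (n - k))).coeff b
            ≤ (u k * Polynomial.derivative (u (n - k))).coeff D := by
          rw [Polynomial.coeff_mul]
          have hmem : ((a, b) : ℕ × ℕ) ∈ Finset.HasAntidiagonal.antidiagonal D :=
            Finset.HasAntidiagonal.mem_antidiagonal.mpr hab
          exact Finset.single_le_sum
            (f := fun x : ℕ × ℕ => (u k).coeff x.1 * (Polynomial.derivative (u (n - k))).coeff x.2)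
            (fun x _ => mul_nonneg (hnonneg _ _) (hderiv_nonneg _ _))
            hmem
        have h1 : (u k).coeff a = (u k).leadingCoeff := by
          rw [← Polynomial.coeff_natDegree, hdk]
        have h2 : (Polynomial.derivative (u (n - k))).coeff b
            = (u (n - k)).leadingCoeff * ((b : ℝ) + 1) := by
          rw [Polynomial.coeff_derivative, ← Polynomial.coeff_natDegree, ← hb1]
        have hb1R : (1 : ℝ) ≤ (b : ℝ) + 1 := by
          have : (0 : ℝ) ≤ (b : ℝ) := Nat.cast_nonneg b
          linarith
        have hlmpos : 0 < (u (n - k)).leadingCoeff :=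
          lt_trans (pow_pos hε0 _) hlm
        have hpow : ε ^ (n + 2) = ε ^ (k + 1) * ε ^ (n - k + 1) := by
          rw [← pow_add]
          congr 1
          omega
        have hstep : ε ^ (n + 2) < (u k).leadingCoeff * (u (n - k)).leadingCoeff := by
          rw [hpow]
          exact mul_lt_mul'' hlk hlm (le_of_lt (pow_pos hε0 _)) (le_of_lt (pow_pos hε0 _))
        calc ε ^ (n + 2) < (u k).leadingCoeff * (u (n - k)).leadingCoeff := hstep
          _ ≤ (u k).leadingCoeff * ((u (n - k)).leadingCoeff * ((b : ℝ) + 1)) := by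
              have hlkpos : 0 < (u k).leadingCoeff := lt_trans (pow_pos hε0 _) hlk
              exact mul_le_mul_of_nonneg_left
                (le_mul_of_one_le_right hlmpos.le hb1R) hlkpos.le
          _ = (u k).coeff a * (Polynomial.derivative (u (n - k))).coeff b := by
              rw [h1, h2]
          _ ≤ _ := hcoef
      -- third derivative coefficient vanishes at D and above
      have hd3 : ∀ j, D ≤ j →
          (Polynomial.derivative (Polynomial.derivative (Polynomial.derivative (u n)))).coeff j
            = 0 := by
        intro j hj
        apply Polynomial.coeff_eq_zero_of_natDegree_lt
        have h3 : (Polynomial.derivative (Polynomial.derivative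
            (Polynomial.derivative (u n)))).natDegree ≤ (u n).natDegree :=
          le_trans (Polynomial.natDegree_derivative_le _) <|
            le_trans (Nat.sub_le _ _) <|
            le_trans (Polynomial.natDegree_derivative_le _) <|
            le_trans (Nat.sub_le _ _) <|
            le_trans (Polynomial.natDegree_derivative_le _) (Nat.sub_le _ _)
        have hdn : (u n).natDegree = d₀ + n * e := (ih n le_rfl).1
        have hne : (n + 1) * e = n * e + e := by ring
        omega
      -- product terms vanish above D
      have hprod_deg : ∀ k ≤ n,
          (u k * Polynomial.derivative (u (n - k))).natDegree ≤ D := by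
        intro k hk
        have hdk := (ih k hk).1
        have hdm := (ih (n - k) (Nat.sub_le n k)).1
        refine le_trans (Polynomial.natDegree_mul_le) ?_
        have hdle : (Polynomial.derivative (u (n - k))).natDegree
            ≤ (u (n - k)).natDegree - 1 := Polynomial.natDegree_derivative_le _
        have hsum : k * e + (n - k) * e = n * e := by
          rw [← add_mul, Nat.add_sub_cancel' hk]
        have hne : (n + 1) * e = n * e + e := by ring
        omega
      -- coefficient identity from the recursion
      have hco : ∀ j, ((n : ℝ) + 1) * (u (n + 1)).coeff j =
          ∑ k ∈ Finset.range (n + 1), (u k * Polynomial.derivative (u (n - k))).coeff j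
            + (Polynomial.derivative (Polynomial.derivative
                (Polynomial.derivative (u n)))).coeff j := by
        intro j
        have := congrArg (fun p => Polynomial.coeff p j) (hrec n)
        simpa [Polynomial.coeff_smul, Polynomial.finset_sum_coeff, smul_eq_mul] using this
      have hn1pos : (0 : ℝ) < (n : ℝ) + 1 := by positivity
      -- coefficient of u (n+1) at D is large
      have hcD : ε ^ (n + 2) < (u (n + 1)).coeff D := by
        have hsum_lt : ((n : ℝ) + 1) * ε ^ (n + 2) <
            ∑ k ∈ Finset.range (n + 1), (u k * Polynomial.derivative (u (n - k))).coeff D := by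
          have := Finset.sum_lt_sum_of_nonempty
            (Finset.nonempty_range_iff.mpr (Nat.succ_ne_zero n)) hterm
          simpa [Finset.sum_const, Finset.card_range, nsmul_eq_mul] using this
        have h := hco D
        rw [hd3 D le_rfl, add_zero] at h
        have : ((n : ℝ) + 1) * ε ^ (n + 2) < ((n : ℝ) + 1) * (u (n + 1)).coeff D := by
          rw [h]; exact hsum_lt
        exact lt_of_mul_lt_mul_left this (le_of_lt hn1pos)
      -- natDegree of u (n+1) is exactly D
      have hndle : (u (n + 1)).natDegree ≤ D := by
        rw [Polynomial.natDegree_le_iff_coeff_eq_zero]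
        intro j hj
        have h := hco j
        rw [hd3 j (le_of_lt hj), add_zero] at h
        have hz : ∑ k ∈ Finset.range (n + 1),
            (u k * Polynomial.derivative (u (n - k))).coeff j = 0 := by
          apply Finset.sum_eq_zero
          intro k hk'
          exact Polynomial.coeff_eq_zero_of_natDegree_lt
            (lt_of_le_of_lt (hprod_deg k (Nat.lt_succ_iff.mp (Finset.mem_range.mp hk'))) hj)
        rw [hz] at h
        exact (mul_eq_zero.mp h).resolve_left (ne_of_gt hn1pos)
      have hnd : (u (n + 1)).natDegree = D := by
        refine le_antisymm hndle ?_
        apply Polynomial.le_natDegree_of_ne_zero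
        exact ne_of_gt (lt_trans (pow_pos hε0 _) hcD)
      constructor
      · exact hnd
      · rw [Polynomial.leadingCoeff, hnd]
        exact hcD
  intro n
  exact (key n n le_rfl).2
end

section
/- Let (uₙ)_{n≥0} be a sequence of real polynomials in x with nonnegative coefficients satisfying the recursion (n+1) u_{n+1} = Σ_{k=0}^{n} u_k · u'_{n−k} + u'''_n, with deg u₀ = d₀ ≥ 2, so that dₙ := deg uₙ = (n+1)d₀ − n. Set l_m := m(d₀ + 2). Then for all n ≥ 1 and all m ≥ 0 with 3(m+1) ≤ d_{3n}, the coefficient c_{3n+m+1, l_{m+1}} of x^{d_{3n+m+1} − l_{m+1}} in u_{3n+m+1} satisfies c_{3n+m+1, l_{m+1}} > [(d_{3n+m} − l_m + 3m)! · (3n)!] / [(d_{3n+m} − l_m − 3)! · (3n+m+1)!] · c_{3n,0}, where c_{3n,0} is the leading coefficient of u_{3n}. -/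
open Polynomial Finset

private lemma kdv_deriv_coeff_nonneg {p : Polynomial ℝ} (hp : ∀ k, 0 ≤ p.coeff k) (k : ℕ) :
    0 ≤ (derivative p).coeff k := by
  rw [coeff_derivative]; exact mul_nonneg (hp _) (by positivity)

private lemma kdv_mul_coeff_nonneg {p q : Polynomial ℝ} (hp : ∀ k, 0 ≤ p.coeff k)
    (hq : ∀ k, 0 ≤ q.coeff k) (j : ℕ) : 0 ≤ (p * q).coeff j := by
  rw [coeff_mul]
  exact Finset.sum_nonneg fun x _ => mul_nonneg (hp _) (hq _)

private lemma kdv_mul_coeff_single_le {p q : Polynomial ℝ} (hp : ∀ k, 0 ≤ p.coeff k)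
    (hq : ∀ k, 0 ≤ q.coeff k) {i j : ℕ} (h : i ≤ j) :
    p.coeff i * q.coeff (j - i) ≤ (p * q).coeff j := by
  rw [coeff_mul]
  exact Finset.single_le_sum (f := fun x : ℕ × ℕ => p.coeff x.1 * q.coeff x.2)
    (fun x _ => mul_nonneg (hp _) (hq _))
    (show (i, j - i) ∈ Finset.HasAntidiagonal.antidiagonal j from Finset.HasAntidiagonal.mem_antidiagonal.mpr (by omega))

private lemma kdv_fac3 (a : ℕ) :
    ((a+3).factorial : ℝ) = ((a:ℝ)+1) * ((a:ℝ)+2) * ((a:ℝ)+3) * (a.factorial : ℝ) := by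
  rw [show a+3 = (a+2)+1 by omega, Nat.factorial_succ, show a+2 = (a+1)+1 by omega,
    Nat.factorial_succ, Nat.factorial_succ]
  push_cast; ring

set_option maxHeartbeats 1000000 in
/-- **Lower bound from the third-derivative term (Lemma 2.2).**
Let `(uₙ)` be real polynomials with nonnegative coefficients satisfying the KdV
recursion `(n+1) u_{n+1} = ∑_{k=0}^{n} u_k u'_{n-k} + u'''_n`, with
`deg u₀ = d₀ ≥ 2`, so that `dₙ := deg uₙ = (n+1)d₀ - n`; set `l_m := m(d₀+2)`.
Then for `n ≥ 1` and `3(m+1) ≤ d_{3n}`, the coefficient `c_{3n+m+1, l_{m+1}}`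
of `x^{d_{3n+m+1} - l_{m+1}}` in `u_{3n+m+1}` satisfies
`c_{3n+m+1, l_{m+1}} > (d_{3n+m} - l_m + 3m)! (3n)! / ((d_{3n+m} - l_m - 3)! (3n+m+1)!) · c_{3n,0}`,
where `c_{3n,0}` is the leading coefficient of `u_{3n}`. -/
theorem kdv_recursion_lower_coefficient_bound
    (u : ℕ → Polynomial ℝ)
    (hnonneg : ∀ n k, 0 ≤ (u n).coeff k)
    (hrec : ∀ n : ℕ, ((n : ℝ) + 1) • u (n + 1) =
      ∑ k ∈ Finset.range (n + 1), u k * Polynomial.derivative (u (n - k))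
        + Polynomial.derivative (Polynomial.derivative (Polynomial.derivative (u n))))
    (d₀ : ℕ) (hd₀ : 2 ≤ d₀) (hdeg : (u 0).natDegree = d₀)
    (d l : ℕ → ℕ)
    (hd : ∀ n, d n = (n + 1) * d₀ - n)
    (hl : ∀ m, l m = m * (d₀ + 2)) :
    ∀ n : ℕ, 1 ≤ n → ∀ m : ℕ, 3 * (m + 1) ≤ d (3 * n) →
      ((d (3 * n + m) - l m + 3 * m).factorial * (3 * n).factorial : ℝ) /
          ((d (3 * n + m) - l m - 3).factorial * (3 * n + m + 1).factorial)
          * (u (3 * n)).leadingCoeff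
        < (u (3 * n + m + 1)).coeff (d (3 * n + m + 1) - l (m + 1)) := by
  -- normal form of d
  have hd' : ∀ r, d r = r * (d₀ - 1) + d₀ := by
    intro r
    have h1 : (r+1)*d₀ = r*d₀ + d₀ := by ring
    have h2 : r * (d₀ - 1) = r * d₀ - r * 1 := Nat.mul_sub r d₀ 1
    have h3 : r * 1 ≤ r * d₀ := Nat.mul_le_mul_left r (by omega)
    rw [hd]; omega
  have hdd : ∀ r s, d (r + s) = d r + s * (d₀ - 1) := by
    intro r s; rw [hd', hd']; ring
  have hd2 : ∀ r, 2 ≤ d r := by intro r; rw [hd']; omega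
  -- coefficient identity from the recursion
  have hkey : ∀ (N j : ℕ), ((N:ℝ)+1) * (u (N+1)).coeff j =
      (∑ k ∈ Finset.range (N+1), (u k * derivative (u (N-k))).coeff j)
      + (u N).coeff (j+3) * (((j:ℝ)+1) * ((j:ℝ)+2) * ((j:ℝ)+3)) := by
    intro N j
    have h := congrArg (fun p : Polynomial ℝ => p.coeff j) (hrec N)
    simp only [coeff_smul, smul_eq_mul, coeff_add, finset_sum_coeff, coeff_derivative,
      show j+1+1+1 = j+3 by omega] at h
    rw [h]; push_cast; ring
  have hSnn : ∀ N j, (0:ℝ) ≤ ∑ k ∈ Finset.range (N+1), (u k * derivative (u (N-k))).coeff j :=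
    fun N j => Finset.sum_nonneg fun k _ =>
      kdv_mul_coeff_nonneg (hnonneg k) (kdv_deriv_coeff_nonneg (hnonneg (N-k))) j
  -- chain inequality from the third-derivative term
  have hchain : ∀ N j, (u N).coeff (j+3) * (((j:ℝ)+1) * ((j:ℝ)+2) * ((j:ℝ)+3))
      ≤ ((N:ℝ)+1) * (u (N+1)).coeff j := by
    intro N j; rw [hkey N j]; linarith [hSnn N j]
  -- degrees and positive leading coefficients
  have lemA : ∀ r, (u r).natDegree = d r ∧ 0 < (u r).coeff (d r) := by
    intro r
    induction r using Nat.strong_induction_on with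
    | _ r ih =>
      cases r with
      | zero =>
        have h0 : d 0 = d₀ := by rw [hd']; omega
        have hne : u 0 ≠ 0 := by
          intro h; rw [h, natDegree_zero] at hdeg; omega
        have hcne : (u 0).coeff (d 0) ≠ 0 := by
          rw [h0, ← hdeg, coeff_natDegree]
          exact leadingCoeff_ne_zero.mpr hne
        exact ⟨by rw [h0, hdeg], lt_of_le_of_ne (hnonneg 0 _) (Ne.symm hcne)⟩
      | succ N =>
        have ihN := ih N (by omega)
        have ih0 := ih 0 (by omega)
        have h0 : d 0 = d₀ := by rw [hd']; omega
        -- positivity of the coefficient at d (N+1)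
        have hidx : d (N+1) - d₀ = d N - 1 ∧ d₀ ≤ d (N+1) ∧ (d N - 1) + 1 = d N := by
          have e1 := hdd N 1; have e2 := hd2 N; omega
        have hderiv : 0 < (derivative (u N)).coeff (d (N+1) - d₀) := by
          rw [hidx.1, coeff_derivative, hidx.2.2]
          have : (0:ℝ) < ((d N - 1 : ℕ):ℝ) + 1 := by positivity
          exact mul_pos ihN.2 this
        have hterm : 0 < (u 0 * derivative (u N)).coeff (d (N+1)) := by
          have := kdv_mul_coeff_single_le (hnonneg 0)
            (kdv_deriv_coeff_nonneg (hnonneg N)) (i := d₀) (j := d (N+1)) hidx.2.1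
          have h00 : 0 < (u 0).coeff d₀ := by rw [← h0]; exact ih0.2
          nlinarith
        have hsum : (u 0 * derivative (u N)).coeff (d (N+1))
            ≤ ∑ k ∈ Finset.range (N+1), (u k * derivative (u (N-k))).coeff (d (N+1)) := by
          have h2 := Finset.single_le_sum
            (f := fun k => (u k * derivative (u (N-k))).coeff (d (N+1)))
            (fun k _ => kdv_mul_coeff_nonneg (hnonneg k)
              (kdv_deriv_coeff_nonneg (hnonneg (N-k))) _)
            (Finset.mem_range.mpr (Nat.succ_pos N))
          simpa using h2
        have hpos : 0 < (u (N+1)).coeff (d (N+1)) := by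
          have hk := hkey N (d (N+1))
          have hfpos : (0:ℝ) < (((d (N+1)):ℝ)+1) * (((d (N+1)):ℝ)+2) * (((d (N+1)):ℝ)+3) := by
            positivity
          have hd3nn : (0:ℝ) ≤ (u N).coeff (d (N+1)+3) *
              ((((d (N+1)):ℝ)+1) * (((d (N+1)):ℝ)+2) * (((d (N+1)):ℝ)+3)) :=
            mul_nonneg (hnonneg N _) hfpos.le
          have hN1 : (0:ℝ) < (N:ℝ)+1 := by positivity
          have hprod : 0 < ((N:ℝ)+1) * (u (N+1)).coeff (d (N+1)) := by
            rw [hk]; linarith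
          nlinarith [hprod, hN1]
        -- degree bound
        have hdegle : (u (N+1)).natDegree ≤ d (N+1) := by
          have hsmul : u (N+1) = (((N:ℝ)+1))⁻¹ • (((N:ℝ)+1) • u (N+1)) := by
            rw [smul_smul, inv_mul_cancel₀ (by positivity), one_smul]
          rw [hsmul, hrec N]
          refine (natDegree_smul_le _ _).trans ((natDegree_add_le _ _).trans (max_le ?_ ?_))
          · refine natDegree_sum_le_of_forall_le _ _ fun k hk => ?_
            have hk' : k < N + 1 := Finset.mem_range.mp hk
            have e1 : (u k).natDegree = d k := (ih k hk').1
            have e2 : (u (N-k)).natDegree = d (N-k) := (ih (N-k) (by omega)).1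
            refine (natDegree_mul_le).trans ?_
            have e3 : (derivative (u (N-k))).natDegree ≤ d (N-k) - 1 :=
              e2 ▸ natDegree_derivative_le _
            have e4 : k * (d₀-1) + (N-k) * (d₀-1) = N * (d₀-1) := by
              rw [← Nat.add_mul]; congr 1; omega
            have e5 : d k = k * (d₀-1) + d₀ := hd' k
            have e6 : d (N-k) = (N-k) * (d₀-1) + d₀ := hd' (N-k)
            have e7 : d (N+1) = (N+1) * (d₀-1) + d₀ := hd' (N+1)
            have e8 : (N+1) * (d₀-1) = N * (d₀-1) + (d₀-1) := by ring
            omega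
          · have e1 : (derivative (u N)).natDegree ≤ d N := by
              refine (natDegree_derivative_le _).trans ?_; rw [ihN.1]; omega
            have e2 : (derivative (derivative (u N))).natDegree ≤ d N :=
              (natDegree_derivative_le _).trans (by omega)
            have e3 : (derivative (derivative (derivative (u N)))).natDegree ≤ d N :=
              (natDegree_derivative_le _).trans (by omega)
            have e4 := hdd N 1
            omega
        have hdegge : d (N+1) ≤ (u (N+1)).natDegree :=
          le_natDegree_of_ne_zero (ne_of_gt hpos)
        exact ⟨le_antisymm hdegle hdegge, hpos⟩
  -- main induction, in subtraction-free form
  intro n hn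
  have ha0 : 0 < (u (3*n)).coeff (d (3*n)) := (lemA (3*n)).2
  have main : ∀ M : ℕ, ∀ j : ℕ, j + 3*(M+1) = d (3*n) →
      ((d (3*n)).factorial : ℝ) * ((3*n).factorial : ℝ) * (u (3*n)).coeff (d (3*n)) <
      (j.factorial : ℝ) * ((3*n+M+1).factorial : ℝ) * (u (3*n+M+1)).coeff j := by
    intro M
    induction M with
    | zero =>
      intro j hj
      simp only [Nat.add_zero] at *
      have hj' : j + 3 = d (3*n) := by omega
      -- strict positivity of the k = 2 term of the product sum
      obtain ⟨q, hq⟩ : ∃ q, 3*n = q + 2 := ⟨3*n - 2, by omega⟩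
      have hd1 : d 1 = 1 * (d₀-1) + d₀ := hd' 1
      have hdq2 : d (3*n) = d q + 2*(d₀-1) := by rw [hq]; exact hdd q 2
      have hdq : 2 ≤ d q := hd2 q
      have he2 : (d 1 - 3) + 3 = d 1 := by omega
      have hle : d 1 - 3 ≤ j := by omega
      have hji : j - (d 1 - 3) = d q - 1 := by omega
      have hu2 : 0 < (u 2).coeff (d 1 - 3) := by
        have hc := hchain 1 (d 1 - 3)
        rw [he2] at hc
        have h1pos : 0 < (u 1).coeff (d 1) := (lemA 1).2
        have hfpos : (0:ℝ) < (((d 1 - 3:ℕ):ℝ)+1) * (((d 1 - 3:ℕ):ℝ)+2) * (((d 1 - 3:ℕ):ℝ)+3) := by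
          positivity
        nlinarith
      have hder : 0 < (derivative (u q)).coeff (j - (d 1 - 3)) := by
        rw [hji, coeff_derivative, show (d q - 1) + 1 = d q by omega]
        exact mul_pos (lemA q).2 (by positivity)
      have ht2 : 0 < (u 2 * derivative (u (3*n - 2))).coeff j := by
        have := kdv_mul_coeff_single_le (hnonneg 2)
          (kdv_deriv_coeff_nonneg (hnonneg (3*n - 2))) hle
        rw [show 3*n - 2 = q by omega] at *
        nlinarith
      have hmem : 2 ∈ Finset.range (3*n+1) := Finset.mem_range.mpr (by omega)
      have hS : (u 2 * derivative (u (3*n - 2))).coeff j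
          ≤ ∑ k ∈ Finset.range (3*n+1), (u k * derivative (u (3*n - k))).coeff j :=
        Finset.single_le_sum
          (f := fun k => (u k * derivative (u (3*n - k))).coeff j)
          (fun k _ => kdv_mul_coeff_nonneg (hnonneg k)
            (kdv_deriv_coeff_nonneg (hnonneg (3*n - k))) _) hmem
      have hk := hkey (3*n) j
      rw [hj'] at hk
      have hbase : (u (3*n)).coeff (d (3*n)) * (((j:ℝ)+1) * ((j:ℝ)+2) * ((j:ℝ)+3))
          < (((3*n : ℕ) : ℝ) + 1) * (u (3*n+1)).coeff j := by
        rw [hk]; linarith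
      have hfacD : ((d (3*n)).factorial : ℝ)
          = ((j:ℝ)+1) * ((j:ℝ)+2) * ((j:ℝ)+3) * (j.factorial : ℝ) := by
        rw [← hj']; exact kdv_fac3 j
      have hfs : ((3*n+1).factorial : ℝ) = (((3*n : ℕ) : ℝ) + 1) * ((3*n).factorial : ℝ) := by
        rw [Nat.factorial_succ]; push_cast; ring
      rw [hfacD, hfs]
      have hposf : (0:ℝ) < (j.factorial : ℝ) * ((3*n).factorial : ℝ) := by positivity
      nlinarith [mul_lt_mul_of_pos_left hbase hposf]
    | succ M IH =>
      intro j hj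
      have hIH := IH (j+3) (by omega)
      have hch := hchain (3*n+M+1) j
      rw [show 3*n+(M+1)+1 = 3*n+M+1+1 by omega]
      have hb : 0 ≤ (u (3*n+M+1)).coeff (j+3) := hnonneg _ _
      have hfac3 := kdv_fac3 j
      have hfs : ((3*n+M+1+1).factorial : ℝ)
          = (((3*n+M+1 : ℕ) : ℝ) + 1) * ((3*n+M+1).factorial : ℝ) := by
        rw [Nat.factorial_succ]; push_cast; ring
      rw [hfs]
      have hposf : (0:ℝ) < (j.factorial : ℝ) * ((3*n+M+1).factorial : ℝ) := by positivity
      rw [hfac3] at hIH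
      nlinarith [mul_le_mul_of_nonneg_left hch hposf.le, hIH]
  -- translate indices and conclude
  intro m hm
  have hDm : d (3*n+m) = d (3*n) + m*(d₀-1) := hdd (3*n) m
  have hDm1 : d (3*n+m+1) = d (3*n) + (m+1)*(d₀-1) := by
    rw [show 3*n+m+1 = 3*n+(m+1) by omega]; exact hdd (3*n) (m+1)
  have hlm : l m = m*(d₀-1) + 3*m := by
    rw [hl, show d₀+2 = (d₀-1)+3 by omega, Nat.mul_add]; ring
  have hlm1 : l (m+1) = (m+1)*(d₀-1) + 3*(m+1) := by
    rw [hl, show d₀+2 = (d₀-1)+3 by omega, Nat.mul_add]; ring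
  have hnum : d (3*n+m) - l m + 3*m = d (3*n) := by omega
  have hden : d (3*n+m) - l m - 3 = d (3*n+m+1) - l (m+1) := by omega
  have hJ : (d (3*n+m+1) - l (m+1)) + 3*(m+1) = d (3*n) := by omega
  have hmain := main m (d (3*n+m+1) - l (m+1)) hJ
  have hlc : (u (3*n)).leadingCoeff = (u (3*n)).coeff (d (3*n)) := by
    rw [Polynomial.leadingCoeff, (lemA (3*n)).1]
  rw [hnum, hden, hlc, div_mul_eq_mul_div, div_lt_iff₀ (by positivity)]
  linarith [hmain]
end

section
/- Let (uₙ)_{n≥0} be a sequence of real polynomials in x with nonnegative coefficients satisfying the recursion (n+1) u_{n+1} = Σ_{k=0}^{n} u_k · u'_{n−k} + u'''_n, with deg u₀ = d₀ ≥ 2 and leading coefficient c_{0,0} > ε for some 0 < ε < 1; set dₙ := deg uₙ = (n+1)d₀ − n and lₙ := n(d₀+2). Then for all n ≥ 1, the coefficient c_{4n, lₙ} of x^{d_{4n} − lₙ} in u_{4n} satisfies c_{4n, lₙ} > [(3n(d₀−1)+d₀)! · (3n)!] / [(3n(d₀−2)+d₀)! · (4n)!] · ε^{3n+1}. In particular these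 coefficients grow factorially in n, so the formal power series Σ_{n≥0} uₙ(x) tⁿ has zero radius of convergence in t for any x at which the relevant monomials are nonzero. -/
open Polynomial Finset


/-- **Factorial divergence for the KdV recursion (end of Section 2.1).**
Let `(uₙ)` be real polynomials with nonnegative coefficients satisfying the KdV
recursion `(n+1) u_{n+1} = ∑_{k=0}^{n} u_k u'_{n-k} + u'''_n`, with
`deg u₀ = d₀ ≥ 2` and leading coefficient `c_{0,0} > ε` for some `0 < ε < 1`;
set `dₙ := deg uₙ = (n+1)d₀ - n` and `lₙ := n(d₀+2)`.  Then for every `n ≥ 1`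
the coefficient `c_{4n, lₙ}` of `x^{d_{4n} - lₙ}` in `u_{4n}` satisfies
`c_{4n, lₙ} > (3n(d₀-1)+d₀)! (3n)! / ((3n(d₀-2)+d₀)! (4n)!) · ε^{3n+1}`,
a factorially growing lower bound. -/
theorem kdv_recursion_factorial_divergence
    (u : ℕ → Polynomial ℝ)
    (hnonneg : ∀ n k, 0 ≤ (u n).coeff k)
    (hrec : ∀ n : ℕ, ((n : ℝ) + 1) • u (n + 1) =
      ∑ k ∈ Finset.range (n + 1), u k * Polynomial.derivative (u (n - k))
        + Polynomial.derivative (Polynomial.derivative (Polynomial.derivative (u n))))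
    (d₀ : ℕ) (hd₀ : 2 ≤ d₀) (hdeg : (u 0).natDegree = d₀)
    (ε : ℝ) (hε0 : 0 < ε) (hε1 : ε < 1)
    (hlead : ε < (u 0).leadingCoeff)
    (d l : ℕ → ℕ)
    (hd : ∀ n, d n = (n + 1) * d₀ - n)
    (hl : ∀ m, l m = m * (d₀ + 2)) :
    ∀ n : ℕ, 1 ≤ n →
      ((3 * n * (d₀ - 1) + d₀).factorial * (3 * n).factorial : ℝ) /
          ((3 * n * (d₀ - 2) + d₀).factorial * (4 * n).factorial)
          * ε ^ (3 * n + 1)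
        < (u (4 * n)).coeff (d (4 * n) - l n) := by
  obtain ⟨K, rfl⟩ : ∃ K, d₀ = K + 2 := ⟨d₀ - 2, by omega⟩
  intro n hn
  -- nonnegativity helpers
  have hDnn : ∀ m k, 0 ≤ (derivative (u m)).coeff k := by
    intro m k
    rw [coeff_derivative]
    exact mul_nonneg (hnonneg _ _) (by positivity)
  have hprodnn : ∀ a b k, 0 ≤ (u a * derivative (u b)).coeff k := by
    intro a b k
    rw [coeff_mul]
    exact Finset.sum_nonneg fun x _ => mul_nonneg (hnonneg _ _) (hDnn _ _)
  have hD3nn : ∀ m k, 0 ≤ (derivative (derivative (derivative (u m)))).coeff k := by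
    intro m k
    rw [coeff_derivative, coeff_derivative, coeff_derivative]
    exact mul_nonneg (mul_nonneg (mul_nonneg (hnonneg _ _) (by positivity)) (by positivity))
      (by positivity)
  -- the key coefficient inequalities from the recursion
  have key : ∀ m j : ℕ,
      (u 0 * derivative (u m)).coeff j ≤ ((m : ℝ) + 1) * (u (m + 1)).coeff j ∧
      (derivative (derivative (derivative (u m)))).coeff j
        ≤ ((m : ℝ) + 1) * (u (m + 1)).coeff j := by
    intro m j
    have h := congrArg (fun p : ℝ[X] => p.coeff j) (hrec m)
    simp only [Polynomial.coeff_smul, Polynomial.coeff_add, Polynomial.finset_sum_coeff,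
      smul_eq_mul] at h
    have hsum : (u 0 * derivative (u (m - 0))).coeff j
        ≤ ∑ k ∈ Finset.range (m + 1), (u k * derivative (u (m - k))).coeff j :=
      Finset.single_le_sum (f := fun k => (u k * derivative (u (m - k))).coeff j)
        (fun k _ => hprodnn _ _ _) (Finset.mem_range.2 (Nat.succ_pos m))
    constructor
    · rw [h]
      have : (u 0 * derivative (u (m - 0))).coeff j = (u 0 * derivative (u m)).coeff j := by
        norm_num
      rw [this] at hsum
      exact le_add_of_le_of_nonneg hsum (hD3nn m j)
    · rw [h]
      exact le_add_of_nonneg_left (Finset.sum_nonneg fun k _ => hprodnn _ _ _)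
  have hL : ε < (u 0).coeff (K + 2) := by
    rw [← hdeg, Polynomial.coeff_natDegree]
    exact hlead
  -- step A : multiply by u 0 and take derivative
  have stepA : ∀ m j : ℕ,
      (u 0).coeff (K + 2) * ((j : ℝ) + 1) * (u m).coeff (j + 1)
        ≤ ((m : ℝ) + 1) * (u (m + 1)).coeff (K + 2 + j) := by
    intro m j
    refine le_trans ?_ (key m (K + 2 + j)).1
    have h1 : (u 0).coeff (K + 2) * (derivative (u m)).coeff j
        ≤ (u 0 * derivative (u m)).coeff (K + 2 + j) := by
      rw [coeff_mul]
      exact Finset.single_le_sum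
        (f := fun x => (u 0).coeff x.1 * (derivative (u m)).coeff x.2)
        (fun x _ => mul_nonneg (hnonneg _ _) (hDnn _ _)) (a := (K + 2, j))
        (Finset.HasAntidiagonal.mem_antidiagonal.2 rfl)
    rw [coeff_derivative] at h1
    calc (u 0).coeff (K + 2) * ((j : ℝ) + 1) * (u m).coeff (j + 1)
        = (u 0).coeff (K + 2) * ((u m).coeff (j + 1) * ((j : ℝ) + 1)) := by ring
      _ ≤ _ := h1
  -- step B : triple derivative
  have stepB : ∀ m j : ℕ,
      ((j : ℝ) + 1) * ((j : ℝ) + 2) * ((j : ℝ) + 3) * (u m).coeff (j + 3)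
        ≤ ((m : ℝ) + 1) * (u (m + 1)).coeff j := by
    intro m j
    refine le_trans ?_ (key m j).2
    have h : (derivative (derivative (derivative (u m)))).coeff j
        = (u m).coeff (j + 3) * ((j : ℝ) + 1) * ((j : ℝ) + 2) * ((j : ℝ) + 3) := by
      simp [coeff_derivative]
      ring
    rw [h]
    exact le_of_eq (by ring)
  -- Phase A : 3n multiplication steps
  have phA : ∀ i : ℕ,
      ε ^ (i + 1) * ∏ j ∈ range i, ((K + 2 + j * (K + 1) : ℕ) : ℝ)
        < (i.factorial : ℝ) * (u i).coeff (K + 2 + i * (K + 1)) := by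
    intro i
    induction i with
    | zero => simpa using hL
    | succ i ih =>
      have hA := stepA i (K + 1 + i * (K + 1))
      rw [show K + 1 + i * (K + 1) + 1 = K + 2 + i * (K + 1) from by ring,
        show K + 2 + (K + 1 + i * (K + 1)) = K + 2 + (i + 1) * (K + 1) from by ring] at hA
      have ec : ((K + 1 + i * (K + 1) : ℕ) : ℝ) + 1 = ((K + 2 + i * (K + 1) : ℕ) : ℝ) := by
        push_cast; ring
      rw [ec] at hA
      have hXpos : (0 : ℝ) < ((K + 2 + i * (K + 1) : ℕ) : ℝ) := by
        exact_mod_cast Nat.add_pos_left (by omega : 0 < K + 2) (i * (K + 1))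
      have hf : (((i + 1).factorial : ℕ) : ℝ) = ((i : ℝ) + 1) * (i.factorial : ℝ) := by
        rw [Nat.factorial_succ]; push_cast; ring
      rw [prod_range_succ, pow_succ, hf]
      calc ε ^ (i + 1) * ε *
            ((∏ j ∈ range i, ((K + 2 + j * (K + 1) : ℕ) : ℝ)) * ((K + 2 + i * (K + 1) : ℕ) : ℝ))
          = (ε * ((K + 2 + i * (K + 1) : ℕ) : ℝ)) *
            (ε ^ (i + 1) * ∏ j ∈ range i, ((K + 2 + j * (K + 1) : ℕ) : ℝ)) := by ring
        _ < (ε * ((K + 2 + i * (K + 1) : ℕ) : ℝ)) *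
            ((i.factorial : ℝ) * (u i).coeff (K + 2 + i * (K + 1))) :=
            mul_lt_mul_of_pos_left ih (mul_pos hε0 hXpos)
        _ ≤ ((u 0).coeff (K + 2) * ((K + 2 + i * (K + 1) : ℕ) : ℝ)) *
            ((i.factorial : ℝ) * (u i).coeff (K + 2 + i * (K + 1))) :=
            mul_le_mul_of_nonneg_right
              (mul_le_mul_of_nonneg_right hL.le hXpos.le)
              (mul_nonneg (Nat.cast_nonneg _) (hnonneg _ _))
        _ = (i.factorial : ℝ) *
            ((u 0).coeff (K + 2) * ((K + 2 + i * (K + 1) : ℕ) : ℝ) *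
              (u i).coeff (K + 2 + i * (K + 1))) := by ring
        _ ≤ (i.factorial : ℝ) * (((i : ℝ) + 1) * (u (i + 1)).coeff (K + 2 + (i + 1) * (K + 1))) :=
            mul_le_mul_of_nonneg_left hA (Nat.cast_nonneg _)
        _ = ((i : ℝ) + 1) * (i.factorial : ℝ) * (u (i + 1)).coeff (K + 2 + (i + 1) * (K + 1)) := by
            ring
  -- atoms for omega
  obtain ⟨A, hA0⟩ : ∃ A, A = 3 * n * (K + 1) := ⟨_, rfl⟩
  obtain ⟨M, hM0⟩ : ∃ M, M = K + 2 + A := ⟨_, rfl⟩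
  have h3nA : 3 * n ≤ A := by
    rw [hA0]
    calc 3 * n = 3 * n * 1 := by ring
      _ ≤ 3 * n * (K + 1) := Nat.mul_le_mul_left _ (by omega)
  -- Phase B : n triple-derivative steps
  have phB : ∀ i : ℕ, i ≤ n →
      ε ^ (3 * n + 1) * ((∏ j ∈ range (3 * n), ((K + 2 + j * (K + 1) : ℕ) : ℝ)) *
          ∏ j ∈ range (3 * i), ((M - j : ℕ) : ℝ))
        < ((3 * n + i).factorial : ℝ) * (u (3 * n + i)).coeff (M - 3 * i) := by
    intro i
    induction i with
    | zero =>
      intro _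
      have h := phA (3 * n)
      rw [show K + 2 + 3 * n * (K + 1) = M from by rw [hM0, hA0]] at h
      simpa using h
    | succ i ih =>
      intro hin
      have IH := ih (by omega)
      obtain ⟨s, hs⟩ : ∃ s, s = M - 3 * (i + 1) := ⟨_, rfl⟩
      have hM3 : 3 * (i + 1) + 2 ≤ M := by omega
      have hB := stepB (3 * n + i) s
      rw [show s + 3 = M - 3 * i from by omega] at hB
      have hQsplit : (∏ j ∈ range (3 * (i + 1)), ((M - j : ℕ) : ℝ))
          = (∏ j ∈ range (3 * i), ((M - j : ℕ) : ℝ)) *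
            (((s : ℝ) + 3) * (((s : ℝ) + 2) * ((s : ℝ) + 1))) := by
        rw [show 3 * (i + 1) = 3 * i + 1 + 1 + 1 from by omega, prod_range_succ,
          prod_range_succ, prod_range_succ]
        rw [show M - (3 * i) = s + 3 from by omega, show M - (3 * i + 1) = s + 2 from by omega,
          show M - (3 * i + 1 + 1) = s + 1 from by omega]
        push_cast
        ring
      rw [hQsplit, show 3 * n + (i + 1) = 3 * n + i + 1 from by omega,
        show M - 3 * (i + 1) = s from by omega]
      have hf : (((3 * n + i + 1).factorial : ℕ) : ℝ)
          = (((3 * n + i : ℕ) : ℝ) + 1) * ((3 * n + i).factorial : ℝ) := by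
        rw [Nat.factorial_succ]; push_cast; ring
      rw [hf]
      calc ε ^ (3 * n + 1) * ((∏ j ∈ range (3 * n), ((K + 2 + j * (K + 1) : ℕ) : ℝ)) *
            ((∏ j ∈ range (3 * i), ((M - j : ℕ) : ℝ)) *
              (((s : ℝ) + 3) * (((s : ℝ) + 2) * ((s : ℝ) + 1)))))
          = (((s : ℝ) + 1) * ((s : ℝ) + 2) * ((s : ℝ) + 3)) *
            (ε ^ (3 * n + 1) * ((∏ j ∈ range (3 * n), ((K + 2 + j * (K + 1) : ℕ) : ℝ)) *
              ∏ j ∈ range (3 * i), ((M - j : ℕ) : ℝ))) := by ring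
        _ < (((s : ℝ) + 1) * ((s : ℝ) + 2) * ((s : ℝ) + 3)) *
            (((3 * n + i).factorial : ℝ) * (u (3 * n + i)).coeff (M - 3 * i)) :=
            mul_lt_mul_of_pos_left IH (by positivity)
        _ = ((3 * n + i).factorial : ℝ) *
            (((s : ℝ) + 1) * ((s : ℝ) + 2) * ((s : ℝ) + 3) * (u (3 * n + i)).coeff (M - 3 * i)) := by
            ring
        _ ≤ ((3 * n + i).factorial : ℝ) *
            ((((3 * n + i : ℕ) : ℝ) + 1) * (u (3 * n + i + 1)).coeff s) :=
            mul_le_mul_of_nonneg_left hB (Nat.cast_nonneg _)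
        _ = (((3 * n + i : ℕ) : ℝ) + 1) * ((3 * n + i).factorial : ℝ) *
            (u (3 * n + i + 1)).coeff s := by ring
  -- assemble
  have hfin := phB n le_rfl
  rw [show 3 * n + n = 4 * n from by omega] at hfin
  obtain ⟨C, hC⟩ : ∃ C, C = n * K := ⟨_, rfl⟩
  have hA' : A = 3 * C + 3 * n := by rw [hA0, hC]; ring
  rw [hd, hl]
  rw [show 3 * n * (K + 2 - 1) + (K + 2) = M from by
      rw [show K + 2 - 1 = K + 1 from rfl, hM0, hA0]; ring]
  rw [show 3 * n * (K + 2 - 2) + (K + 2) = M - 3 * n from by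
      rw [show K + 2 - 2 = K from rfl, show 3 * n * K + (K + 2) = 3 * C + (K + 2) from by
        rw [hC]; ring]
      omega]
  rw [show (4 * n + 1) * (K + 2) - 4 * n - n * (K + 2 + 2) = M - 3 * n from by
      rw [show (4 * n + 1) * (K + 2) = 4 * C + 8 * n + (K + 2) from by rw [hC]; ring,
        show n * (K + 2 + 2) = C + 4 * n from by rw [hC]; ring]
      omega]
  -- bound the A-phase product below by (3n)!
  have hP : ((3 * n).factorial : ℝ) ≤ ∏ j ∈ range (3 * n), ((K + 2 + j * (K + 1) : ℕ) : ℝ) := by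
    have hnat : (3 * n).factorial ≤ ∏ j ∈ range (3 * n), (K + 2 + j * (K + 1)) := by
      rw [← Finset.prod_range_add_one_eq_factorial]
      apply Finset.prod_le_prod'
      intro j _
      have h1 : j ≤ j * (K + 1) := Nat.le_mul_of_pos_right j (Nat.succ_pos K)
      calc j + 1 ≤ j * (K + 1) + (K + 2) := Nat.add_le_add h1 (by omega)
        _ = K + 2 + j * (K + 1) := Nat.add_comm _ _
    calc ((3 * n).factorial : ℝ) ≤ ((∏ j ∈ range (3 * n), (K + 2 + j * (K + 1)) : ℕ) : ℝ) :=
        Nat.cast_le.2 hnat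
      _ = ∏ j ∈ range (3 * n), ((K + 2 + j * (K + 1) : ℕ) : ℝ) := Nat.cast_prod _ _
  have hQ : (∏ j ∈ range (3 * n), ((M - j : ℕ) : ℝ)) = ((M.descFactorial (3 * n) : ℕ) : ℝ) := by
    rw [Nat.descFactorial_eq_prod_range, Nat.cast_prod]
  have h3nM : 3 * n ≤ M := by omega
  have hMfac : (M - 3 * n).factorial * M.descFactorial (3 * n) = M.factorial :=
    Nat.factorial_mul_descFactorial h3nM
  have hMfacR : (M.factorial : ℝ)
      = ((M - 3 * n).factorial : ℝ) * (M.descFactorial (3 * n) : ℝ) := by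
    exact_mod_cast hMfac.symm
  rw [div_mul_eq_mul_div, div_lt_iff₀ (by positivity), hMfacR]
  have key2 : ε ^ (3 * n + 1) * (((3 * n).factorial : ℝ) * (M.descFactorial (3 * n) : ℝ))
      < ((4 * n).factorial : ℝ) * (u (4 * n)).coeff (M - 3 * n) := by
    calc ε ^ (3 * n + 1) * (((3 * n).factorial : ℝ) * (M.descFactorial (3 * n) : ℝ))
        ≤ ε ^ (3 * n + 1) * ((∏ j ∈ range (3 * n), ((K + 2 + j * (K + 1) : ℕ) : ℝ)) *
            ∏ j ∈ range (3 * n), ((M - j : ℕ) : ℝ)) := by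
          apply mul_le_mul_of_nonneg_left _ (by positivity)
          rw [hQ]
          exact mul_le_mul_of_nonneg_right hP (Nat.cast_nonneg _)
      _ < _ := hfin
  calc ((M - 3 * n).factorial : ℝ) * (M.descFactorial (3 * n) : ℝ) * ((3 * n).factorial : ℝ) *
        ε ^ (3 * n + 1)
      = ((M - 3 * n).factorial : ℝ) *
        (ε ^ (3 * n + 1) * (((3 * n).factorial : ℝ) * (M.descFactorial (3 * n) : ℝ))) := by ring
    _ < ((M - 3 * n).factorial : ℝ) * (((4 * n).factorial : ℝ) * (u (4 * n)).coeff (M - 3 * n)) :=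
        mul_lt_mul_of_pos_left key2 (by exact_mod_cast (M - 3 * n).factorial_pos)
    _ = (u (4 * n)).coeff (M - 3 * n) * (((M - 3 * n).factorial : ℝ) * ((4 * n).factorial : ℝ)) := by
        ring
end

section
/- Let (uₙ)_{n≥0} be a sequence of formal power series in x over ℝ, uₙ = Σ_{p≥0} b_{n,p} x^p, all of whose coefficients b_{n,p} are nonnegative, satisfying the recursion (n+1) u_{n+1} = Σ_{k=0}^{n} u_k · u'_{n−k} + u'''_n for every n ≥ 0 (where ' denotes the formal derivative d/dx). Suppose that for some integer d₀ ≥ 2 and some 0 < ε < 1 one has b_{0,d₀} > ε. Then, setting dₙ := n(d₀ − 1) + d₀, one has b_{n, dₙ} > ε^{n+1} for every n ≥ 1. -/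
/-!
Extracting the coefficient of `x^{d_{n+1}}` from the recursion, every term on the right has
nonnegative coefficients, so `(n+1) b_{n+1,d_{n+1}}` dominates the single product
`b_{0,d₀} · d_n b_{n,d_n}` coming from `u₀ u'ₙ`. Since `d_n ≥ n + 1`, the factor `d_n`
absorbs `n + 1` and induction gives `b_{n,d_n} > ε^{n+1}`.
-/

namespace PowerSeries

variable {R : Type*} [CommSemiring R] [PartialOrder R] [IsOrderedRing R]

def CoeffNonneg (f : R⟦X⟧) : Prop := ∀ n, 0 ≤ coeff n f

theorem CoeffNonneg.derivative {f : R⟦X⟧} (hf : f.CoeffNonneg) :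
    (derivative R f).CoeffNonneg := fun n => by
  rw [coeff_derivative]
  exact mul_nonneg (hf _) (add_nonneg n.cast_nonneg zero_le_one)

theorem CoeffNonneg.mul {f g : R⟦X⟧} (hf : f.CoeffNonneg) (hg : g.CoeffNonneg) :
    (f * g).CoeffNonneg := fun n => by
  rw [coeff_mul]
  exact Finset.sum_nonneg fun p _ => mul_nonneg (hf _) (hg _)

theorem CoeffNonneg.coeff_mul_coeff_le {f g : R⟦X⟧} (hf : f.CoeffNonneg) (hg : g.CoeffNonneg)
    (i j : ℕ) : coeff i f * coeff j g ≤ coeff (i + j) (f * g) := by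
  rw [coeff_mul]
  exact Finset.single_le_sum (f := fun p : ℕ × ℕ => coeff p.1 f * coeff p.2 g)
    (fun p _ => mul_nonneg (hf _) (hg _)) (a := (i, j)) (by simp)

end PowerSeries

open PowerSeries

section KdV

variable {u : ℕ → ℝ⟦X⟧}

theorem kdv_coeff_mul_le_coeff_succ (hnonneg : ∀ n, (u n).CoeffNonneg)
    (hrec : ∀ n : ℕ, ((n : ℝ) + 1) • u (n + 1) =
      ∑ k ∈ Finset.range (n + 1), u k * derivative ℝ (u (n - k))
        + derivative ℝ (derivative ℝ (derivative ℝ (u n))))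
    (n i j : ℕ) :
    coeff i (u 0) * (coeff (j + 1) (u n) * (j + 1 : ℝ)) ≤
      ((n : ℝ) + 1) * coeff (i + j) (u (n + 1)) := by
  have hprod : ∀ k, (u k * derivative ℝ (u (n - k))).CoeffNonneg := fun k =>
    (hnonneg k).mul (hnonneg _).derivative
  have hrec_coeff := congrArg (coeff (i + j)) (hrec n)
  rw [map_smul, map_add, map_sum, smul_eq_mul] at hrec_coeff
  rw [hrec_coeff, ← coeff_derivative]
  calc coeff i (u 0) * coeff j (derivative ℝ (u n))
      ≤ coeff (i + j) (u 0 * derivative ℝ (u (n - 0))) :=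
        (hnonneg 0).coeff_mul_coeff_le (hnonneg n).derivative i j
    _ ≤ ∑ k ∈ Finset.range (n + 1), coeff (i + j) (u k * derivative ℝ (u (n - k))) :=
        Finset.single_le_sum (f := fun k => coeff (i + j) (u k * derivative ℝ (u (n - k))))
          (fun k _ => hprod k _) (by simp)
    _ ≤ _ := le_add_of_nonneg_right ((hnonneg n).derivative.derivative.derivative _)

end KdV

theorem kdv_recursion_powerSeries_coeff_bound_general
    (u : ℕ → PowerSeries ℝ)
    (hnonneg : ∀ n p, 0 ≤ PowerSeries.coeff (R := ℝ) p (u n))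
    (hrec : ∀ n : ℕ, ((n : ℝ) + 1) • u (n + 1) =
      ∑ k ∈ Finset.range (n + 1), u k * PowerSeries.derivative ℝ (u (n - k))
        + PowerSeries.derivative ℝ (PowerSeries.derivative ℝ (PowerSeries.derivative ℝ (u n))))
    (d₀ : ℕ) (hd₀ : 2 ≤ d₀)
    (ε : ℝ) (hε0 : 0 < ε)
    (hb0 : ε < PowerSeries.coeff (R := ℝ) d₀ (u 0)) :
    ∀ n : ℕ, 1 ≤ n →
      ε ^ (n + 1) < PowerSeries.coeff (R := ℝ) (n * (d₀ - 1) + d₀) (u n) := by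
  obtain ⟨m, rfl⟩ : ∃ m, d₀ = m + 2 := ⟨d₀ - 2, by omega⟩
  suffices h : ∀ n : ℕ, ε ^ (n + 1) < coeff (n * (m + 1) + (m + 2)) (u n) from fun n _ => h n
  intro n
  induction n with
  | zero => simpa using hb0
  | succ n ih =>
    set j := n * (m + 1) + (m + 1)
    have hn_le_j : (n : ℝ) + 1 ≤ j + 1 := by
      have : n ≤ n * (m + 1) := Nat.le_mul_of_pos_right n (by omega)
      exact_mod_cast (by omega : n + 1 ≤ j + 1)
    have hdeg : (n + 1) * (m + 1) + (m + 2) = m + 2 + j := by ring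
    rw [hdeg]
    refine lt_of_mul_lt_mul_left ?_ (by positivity : (0 : ℝ) ≤ n + 1)
    calc ((n : ℝ) + 1) * ε ^ (n + 1 + 1) = ε ^ (n + 2) * (n + 1) := by ring
      _ ≤ ε ^ (n + 2) * (j + 1) := by gcongr
      _ = ε * (ε ^ (n + 1) * (j + 1)) := by ring
      _ < coeff (m + 2) (u 0) * (coeff (j + 1) (u n) * (j + 1)) := by gcongr; exact ih
      _ ≤ _ := kdv_coeff_mul_le_coeff_succ hnonneg hrec n (m + 2) j

/-- **The nonpolynomial case for the KdV recursion (Section 2.2).**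
Let `(uₙ)` be formal power series in `x` over `ℝ`, `uₙ = ∑ b_{n,p} x^p`, with all
coefficients nonnegative, satisfying the KdV recursion
`(n+1) u_{n+1} = ∑_{k=0}^{n} u_k u'_{n-k} + u'''_n` (formal derivatives).  If
`b_{0,d₀} > ε` for some integer `d₀ ≥ 2` and some `0 < ε < 1`, then with
`dₙ := n(d₀-1)+d₀` one has `b_{n,dₙ} > ε^{n+1}` for every `n ≥ 1`. -/
theorem kdv_recursion_powerSeries_coeff_bound
    (u : ℕ → PowerSeries ℝ)
    (hnonneg : ∀ n p, 0 ≤ PowerSeries.coeff (R := ℝ) p (u n))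
    (hrec : ∀ n : ℕ, ((n : ℝ) + 1) • u (n + 1) =
      ∑ k ∈ Finset.range (n + 1), u k * PowerSeries.derivative ℝ (u (n - k))
        + PowerSeries.derivative ℝ (PowerSeries.derivative ℝ (PowerSeries.derivative ℝ (u n))))
    (d₀ : ℕ) (hd₀ : 2 ≤ d₀)
    (ε : ℝ) (hε0 : 0 < ε) (hε1 : ε < 1)
    (hb0 : ε < PowerSeries.coeff (R := ℝ) d₀ (u 0)) :
    ∀ n : ℕ, 1 ≤ n →
      ε ^ (n + 1) < PowerSeries.coeff (R := ℝ) (n * (d₀ - 1) + d₀) (u n) :=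
  kdv_recursion_powerSeries_coeff_bound_general u hnonneg hrec d₀ hd₀ ε hε0 hb0
end

section
/- Let c > 0 and let (aₙ)_{n≥0} be a sequence of nonnegative reals with a₀ = c satisfying the recursion (n+1) a_{n+1} = Σ_{k=0}^{n} (3(n−k)+2) a_k a_{n−k} + (3n+2)(3n+3)(3n+4) aₙ for all n ≥ 0. Then aₙ ≥ c · (3n+1)! / n! for every n ≥ 0. (Consequently the formal series Σ aₙ tⁿ has zero radius of convergence, so the KdV initial value problem with initial datum u₀(x) = c/(1−x)² has no solution holomorphic near the origin of ℂ².) -/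
/-!
Every term of the quadratic convolution is nonnegative, so the recursion gives
`(n+1) aₙ₊₁ ≥ (3n+2)(3n+3)(3n+4) aₙ`. The sequence `c (3n+1)!/n!` satisfies this
inequality with equality, so it is a lower bound for `aₙ` by induction.
-/

open Finset

theorem le_of_linear_recursion_le {a b p w : ℕ → ℝ} (hp : ∀ n, 0 ≤ p n) (hw : ∀ n, 0 < w n)
    (h0 : b 0 ≤ a 0) (hb : ∀ n, w n * b (n + 1) = p n * b n)
    (ha : ∀ n, p n * a n ≤ w n * a (n + 1)) (n : ℕ) : b n ≤ a n := by
  induction n with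
  | zero => exact h0
  | succ n ih =>
    refine le_of_mul_le_mul_left ?_ (hw n)
    calc w n * b (n + 1) = p n * b n := hb n
      _ ≤ p n * a n := mul_le_mul_of_nonneg_left ih (hp n)
      _ ≤ w n * a (n + 1) := ha n

theorem weighted_convolution_nonneg {a : ℕ → ℝ} (ha : ∀ n, 0 ≤ a n) (n : ℕ) :
    0 ≤ ∑ k ∈ range (n + 1), (3 * ((n : ℝ) - k) + 2) * a k * a (n - k) := by
  refine sum_nonneg fun k hk => mul_nonneg (mul_nonneg ?_ (ha k)) (ha (n - k))
  have hkn : (k : ℝ) ≤ n := by exact_mod_cast Nat.lt_succ_iff.mp (mem_range.mp hk)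
  linarith

theorem factorial_three_mul_add_one_div_factorial_succ (n : ℕ) :
    ((n : ℝ) + 1) * ((3 * (n + 1) + 1).factorial / (n + 1).factorial : ℝ) =
      (3 * n + 2) * (3 * n + 3) * (3 * n + 4) * ((3 * n + 1).factorial / n.factorial) := by
  rw [show 3 * (n + 1) + 1 = 3 * n + 1 + 1 + 1 + 1 by ring]
  simp only [Nat.factorial_succ]
  push_cast
  field_simp
  ring

theorem kdv_double_pole_coefficient_bound_general
    (c : ℝ)
    (a : ℕ → ℝ) (hnonneg : ∀ n, 0 ≤ a n) (ha0 : a 0 = c)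
    (hrec : ∀ n : ℕ, ((n : ℝ) + 1) * a (n + 1) =
      (∑ k ∈ Finset.range (n + 1), (3 * ((n : ℝ) - k) + 2) * a k * a (n - k))
        + (3 * (n : ℝ) + 2) * (3 * (n : ℝ) + 3) * (3 * (n : ℝ) + 4) * a n) :
    ∀ n : ℕ, c * (3 * n + 1).factorial / n.factorial ≤ a n := by
  intro n
  simp only [mul_div_assoc]
  refine le_of_linear_recursion_le (b := fun n => c * ((3 * n + 1).factorial / n.factorial))
    (p := fun n => (3 * n + 2) * (3 * n + 3) * (3 * n + 4))
    (w := fun n => (n : ℝ) + 1) (fun n => by positivity) (fun n => by positivity)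
    (by simp [ha0]) (fun n => ?_) (fun n => ?_) n
  · rw [mul_left_comm, factorial_three_mul_add_one_div_factorial_succ]
    ring
  · rw [hrec n]
    linarith [weighted_convolution_nonneg hnonneg n]

/-- **The isolated double pole case (Section 2.4).**
Let `c > 0` and let `(aₙ)` be nonnegative reals with `a₀ = c` satisfying
`(n+1) a_{n+1} = ∑_{k=0}^{n} (3(n-k)+2) a_k a_{n-k} + (3n+2)(3n+3)(3n+4) aₙ`.
Then `aₙ ≥ c (3n+1)! / n!` for every `n ≥ 0`. -/
theorem kdv_double_pole_coefficient_bound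
    (c : ℝ) (hc : 0 < c)
    (a : ℕ → ℝ) (hnonneg : ∀ n, 0 ≤ a n) (ha0 : a 0 = c)
    (hrec : ∀ n : ℕ, ((n : ℝ) + 1) * a (n + 1) =
      (∑ k ∈ Finset.range (n + 1), (3 * ((n : ℝ) - k) + 2) * a k * a (n - k))
        + (3 * (n : ℝ) + 2) * (3 * (n : ℝ) + 3) * (3 * (n : ℝ) + 4) * a n) :
    ∀ n : ℕ, c * (3 * n + 1).factorial / n.factorial ≤ a n :=
  kdv_double_pole_coefficient_bound_general c a hnonneg ha0 hrec
end

section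
/- Let (uₙ)_{n≥0} be a sequence of polynomials in x whose coefficients are real-analytic functions of t with all Taylor coefficients about t = 0 nonnegative, satisfying the KP recursion (n+2)(n+1) u_{n+2} = ∂⁴uₙ/∂x⁴ + Σ_{j=0}^{n} ∂/∂x (u_j · ∂u_{n−j}/∂x) + ∂²uₙ/∂t∂x. Suppose u₀ and u₁ have x-degrees d₀ and d₁ with 3d₀ ≥ 2d₁ + 2 and d₀ ≥ 3, and that for some 0 < ε < 1 the leading x-coefficients satisfy c_{0,0}(t) > ε and c_{1,0}(t) > ε for all t > 0. Then for all n ≥ 0 and all t > 0, the leading x-coefficients satisfy c_{2n,0}(t) > ε^{n+1} and c_{2n+1,0}(t) > ε^{n+1}. -/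
open Filter Set

lemma KPaux.iteratedDeriv_iteratedDeriv (f : ℝ → ℝ) (k m : ℕ) :
    iteratedDeriv k (iteratedDeriv m f) = iteratedDeriv (k + m) f := by
  induction k with
  | zero => simp [iteratedDeriv_zero]
  | succ k ih =>
    rw [iteratedDeriv_succ, ih, show k + 1 + m = (k + m) + 1 from by omega, iteratedDeriv_succ]

lemma KPaux.exists_series_deriv {f : ℝ → ℝ} {p : FormalMultilinearSeries ℝ ℝ ℝ} {x : ℝ}
    {r : ENNReal} (h : HasFPowerSeriesOnBall f p x r) :
    ∃ q : FormalMultilinearSeries ℝ ℝ ℝ, HasFPowerSeriesOnBall (deriv f) q x r := by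
  refine ⟨_, ((ContinuousLinearMap.apply ℝ ℝ (1 : ℝ)).comp_hasFPowerSeriesOnBall h.fderiv).congr
    fun z _ => ?_⟩
  simp [Function.comp, fderiv_apply_one_eq_deriv]

lemma KPaux.exists_series_iteratedDeriv {f : ℝ → ℝ} {p : FormalMultilinearSeries ℝ ℝ ℝ} {x : ℝ}
    {r : ENNReal} (h : HasFPowerSeriesOnBall f p x r) (m : ℕ) :
    ∃ q : FormalMultilinearSeries ℝ ℝ ℝ, HasFPowerSeriesOnBall (iteratedDeriv m f) q x r := by
  induction m with
  | zero => exact ⟨p, by simpa [iteratedDeriv_zero] using h⟩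
  | succ m ih =>
    obtain ⟨q, hq⟩ := ih
    obtain ⟨q', hq'⟩ := KPaux.exists_series_deriv hq
    exact ⟨q', by rwa [← iteratedDeriv_succ] at hq'⟩

lemma KPaux.nonneg_on_ball {g : ℝ → ℝ} {q : FormalMultilinearSeries ℝ ℝ ℝ} {x : ℝ} {r : ENNReal}
    (h : HasFPowerSeriesOnBall g q x r)
    (hd : ∀ k, 0 ≤ iteratedDeriv k g x) {y : ℝ} (hy0 : 0 ≤ y)
    (hyr : (‖y‖₊ : ENNReal) < r) : 0 ≤ g (x + y) := by
  have hsum := h.hasSum_iteratedFDeriv (y := y)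
    (by simpa [EMetric.mem_ball, enorm_eq_nnnorm] using hyr)
  refine hasSum_le (fun k => ?_) hasSum_zero hsum
  have heq : iteratedFDeriv ℝ k g x (fun _ => y) = (∏ _i : Fin k, y) • iteratedDeriv k g x :=
    iteratedFDeriv_apply_eq_iteratedDeriv_mul_prod
  rw [heq]
  simp only [Finset.prod_const, Finset.card_univ, Fintype.card_fin, smul_eq_mul]
  have h1 : (0:ℝ) ≤ ((Nat.factorial k : ℝ))⁻¹ := by positivity
  exact smul_nonneg h1 (mul_nonneg (pow_nonneg hy0 k) (hd k))

lemma KPaux.analytic_nonneg {f : ℝ → ℝ} (hf : ∀ t, AnalyticAt ℝ f t)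
    (h0 : ∀ m, 0 ≤ iteratedDeriv m f 0) :
    ∀ t : ℝ, 0 ≤ t → ∀ m, 0 ≤ iteratedDeriv m f t := by
  have han : ∀ m t, AnalyticAt ℝ (iteratedDeriv m f) t := by
    intro m
    induction m with
    | zero => simpa [iteratedDeriv_zero] using hf
    | succ m ih =>
      intro t
      rw [iteratedDeriv_succ]
      have h2 : AnalyticOnNhd ℝ (iteratedDeriv m f) univ := fun y _ => ih y
      exact h2.deriv t trivial
  set s : Set ℝ := {t | ∀ m, 0 ≤ iteratedDeriv m f t} with hs
  have hclosed : IsClosed s := by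
    have h3 : s = ⋂ m, (iteratedDeriv m f) ⁻¹' Ici 0 := by
      ext t; simp [hs, mem_iInter]
    rw [h3]
    exact isClosed_iInter fun m => IsClosed.preimage
      (continuous_iff_continuousAt.2 fun t => (han m t).continuousAt) isClosed_Ici
  intro t ht
  have key : Icc (0:ℝ) t ⊆ s := by
    apply (hclosed.inter isClosed_Icc).Icc_subset_of_forall_mem_nhdsWithin
    · exact h0
    · rintro x ⟨hxs, hx0, _⟩
      obtain ⟨p, r, hp⟩ := hf x
      obtain ⟨r', hr'0, hr'r⟩ := ENNReal.lt_iff_exists_nnreal_btwn.1 hp.r_pos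
      have hr'pos : (0:ℝ) < (r' : ℝ) := by exact_mod_cast hr'0
      have hsub : Ioo x (x + (r' : ℝ)) ⊆ s := by
        rintro z ⟨hz1, hz2⟩ m
        obtain ⟨q, hq⟩ := KPaux.exists_series_iteratedDeriv hp m
        have hder : ∀ k, 0 ≤ iteratedDeriv k (iteratedDeriv m f) x := by
          intro k
          rw [KPaux.iteratedDeriv_iteratedDeriv]
          exact hxs _
        have hz : z = x + (z - x) := by ring
        rw [hz]
        refine KPaux.nonneg_on_ball hq hder (by linarith) (lt_trans ?_ hr'r)
        rw [ENNReal.coe_lt_coe, ← NNReal.coe_lt_coe, coe_nnnorm, Real.norm_eq_abs,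
          abs_of_nonneg (by linarith : (0:ℝ) ≤ z - x)]
        linarith
      exact Filter.mem_of_superset
        (Ioo_mem_nhdsGT_of_mem ⟨le_refl x, by linarith⟩) hsub
  exact key ⟨ht, le_refl t⟩


namespace KPaux

def kpDeg (d₀ d₁ n : ℕ) : ℕ := n / 2 * (d₀ - 2) + if n % 2 = 0 then d₀ else d₁

lemma kpDeg_even (d₀ d₁ m : ℕ) : kpDeg d₀ d₁ (2*m) = m * (d₀ - 2) + d₀ := by
  unfold kpDeg
  rw [show 2*m/2 = m from by omega, show (2*m) % 2 = 0 from by omega]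
  simp

lemma kpDeg_odd (d₀ d₁ m : ℕ) : kpDeg d₀ d₁ (2*m+1) = m * (d₀ - 2) + d₁ := by
  unfold kpDeg
  rw [show (2*m+1)/2 = m from by omega, show (2*m+1) % 2 = 1 from by omega]
  simp

lemma kpDeg_step (d₀ d₁ n : ℕ) : kpDeg d₀ d₁ (n+2) = kpDeg d₀ d₁ n + (d₀ - 2) := by
  unfold kpDeg
  rw [show (n+2)/2 = n/2+1 from by omega, show (n+2) % 2 = n % 2 from by omega, add_mul, one_mul]
  ring

lemma kpDeg_zero (d₀ d₁ : ℕ) : kpDeg d₀ d₁ 0 = d₀ := by simp [kpDeg]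

lemma sum_halves (m : ℕ) :
    ∑ j ∈ Finset.range (2*m+2), (j/2 + if j % 2 = 0 then 3 else 0) = m*(m+1) + 3*(m+1) := by
  induction m with
  | zero => simp [Finset.sum_range_succ]
  | succ m ih =>
    rw [show 2*(m+1)+2 = (2*m+2) + 1 + 1 from by ring, Finset.sum_range_succ,
      Finset.sum_range_succ, ih]
    have h1 : (2*m+2)/2 = m+1 := by omega
    have h2 : (2*m+2) % 2 = 0 := by omega
    have h3 : (2*m+2+1)/2 = m+1 := by omega
    have h4 : (2*m+2+1) % 2 = 1 := by omega
    simp only [h1, h2, h3, h4]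
    norm_num
    ring

lemma weight_bound (d₀ d₁ n : ℕ) (hd₀ : 3 ≤ d₀) :
    (n+2)*(n+1) ≤ (kpDeg d₀ d₁ (n+2) + 1) *
      ∑ j ∈ (Finset.range (n+1)).filter
        (fun j => kpDeg d₀ d₁ j + kpDeg d₀ d₁ (n - j) = kpDeg d₀ d₁ (n+2) + 2),
        kpDeg d₀ d₁ (n - j) := by
  obtain ⟨e, rfl⟩ : ∃ e, d₀ = e + 3 := ⟨d₀ - 3, by omega⟩
  have he2 : e + 3 - 2 = e + 1 := rfl
  rcases Nat.even_or_odd n with ⟨m, rfl⟩ | ⟨m, rfl⟩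
  · -- even case, n = m + m
    simp only [show m + m = 2*m from by ring]
    have hsubset : (Finset.range (m+1)).image (fun i => 2*i) ⊆
        (Finset.range (2*m+1)).filter
          (fun j => kpDeg (e+3) d₁ j + kpDeg (e+3) d₁ (2*m - j) = kpDeg (e+3) d₁ (2*m+2) + 2) := by
      intro j hj
      obtain ⟨i, hi, rfl⟩ := Finset.mem_image.mp hj
      have him : i ≤ m := by have := Finset.mem_range.mp hi; omega
      refine Finset.mem_filter.mpr ⟨Finset.mem_range.mpr (by omega), ?_⟩
      obtain ⟨a, rfl⟩ : ∃ a, m = i + a := ⟨m - i, by omega⟩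
      rw [show 2*(i+a) - 2*i = 2*a from by omega, show 2*(i+a)+2 = 2*(i+a+1) from by ring,
        kpDeg_even, kpDeg_even, kpDeg_even, he2]
      ring
    have hsum1 : ∑ j ∈ (Finset.range (m+1)).image (fun i => 2*i),
        kpDeg (e+3) d₁ (2*m - j) = ∑ i ∈ Finset.range (m+1), kpDeg (e+3) d₁ (2*m - 2*i) :=
      Finset.sum_image (by intro x _ y _ h; simp only at h; omega)
    have hsum2 : ∀ i ∈ Finset.range (m+1), (m - i) + 3 ≤ kpDeg (e+3) d₁ (2*m - 2*i) := by
      intro i hi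
      have him : i ≤ m := by have := Finset.mem_range.mp hi; omega
      rw [show 2*m - 2*i = 2*(m-i) from by omega, kpDeg_even, he2]
      have h5 : m - i ≤ (m-i)*(e+1) := Nat.le_mul_of_pos_right _ (by omega)
      omega
    have hsum3 : ∑ i ∈ Finset.range (m+1), ((m-i)+3) = ∑ i ∈ Finset.range (m+1), (i+3) := by
      have h := Finset.sum_range_reflect (fun i => i + 3) (m+1)
      rw [← h]
      exact Finset.sum_congr rfl fun j hj => by omega
    have hgauss : 2 * ∑ i ∈ Finset.range (m+1), (i+3) = m*(m+1) + 6*(m+1) := by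
      rw [Finset.sum_add_distrib, Finset.sum_const, Finset.card_range, smul_eq_mul]
      have h := Finset.sum_range_id_mul_two (m+1)
      simp only [Nat.add_sub_cancel] at h
      have h' : (m+1)*m = m*(m+1) := by ring
      linarith
    have hk2 : m + 5 ≤ kpDeg (e+3) d₁ (2*m+2) + 1 := by
      rw [show 2*m+2 = 2*(m+1) from by ring, kpDeg_even, he2]
      have h5 : m+1 ≤ (m+1)*(e+1) := Nat.le_mul_of_pos_right _ (by omega)
      omega
    have hS : ∑ i ∈ Finset.range (m+1), (i+3) ≤
        ∑ j ∈ (Finset.range (2*m+1)).filter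
          (fun j => kpDeg (e+3) d₁ j + kpDeg (e+3) d₁ (2*m - j) = kpDeg (e+3) d₁ (2*m+2) + 2),
          kpDeg (e+3) d₁ (2*m - j) := by
      rw [← hsum3]
      calc ∑ i ∈ Finset.range (m+1), ((m-i)+3)
          ≤ ∑ i ∈ Finset.range (m+1), kpDeg (e+3) d₁ (2*m - 2*i) := Finset.sum_le_sum hsum2
        _ = ∑ j ∈ (Finset.range (m+1)).image (fun i => 2*i), kpDeg (e+3) d₁ (2*m - j) :=
            hsum1.symm
        _ ≤ _ := Finset.sum_le_sum_of_subset hsubset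
    have hfin : (2*m+2)*(2*m+1) ≤ (m+5) * ∑ i ∈ Finset.range (m+1), (i+3) := by
      have h2 : 2*((2*m+2)*(2*m+1)) ≤ (m+5) * (2 * ∑ i ∈ Finset.range (m+1), (i+3)) := by
        rw [hgauss]; nlinarith [Nat.zero_le (m*m*m), Nat.zero_le (m*m)]
      have h3 : (m+5) * (2 * ∑ i ∈ Finset.range (m+1), (i+3))
          = 2 * ((m+5) * ∑ i ∈ Finset.range (m+1), (i+3)) := by ring
      rw [h3] at h2
      exact Nat.le_of_mul_le_mul_left h2 (by norm_num)
    exact le_trans hfin (Nat.mul_le_mul hk2 hS)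
  · -- odd case, n = 2*m+1
    simp only [show (2*m+1)+1 = 2*m+2 from rfl, show (2*m+1)+2 = 2*m+3 from rfl]
    have hall : ∀ j ∈ Finset.range (2*m+2),
        kpDeg (e+3) d₁ j + kpDeg (e+3) d₁ (2*m+1 - j) = kpDeg (e+3) d₁ (2*m+3) + 2 := by
      intro j hj
      have hj' : j < 2*m+2 := Finset.mem_range.mp hj
      rw [show 2*m+3 = 2*(m+1)+1 from by ring, kpDeg_odd, he2]
      rcases Nat.even_or_odd j with ⟨i, rfl⟩ | ⟨i, rfl⟩
      · have him : i ≤ m := by omega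
        obtain ⟨a, rfl⟩ : ∃ a, m = i + a := ⟨m - i, by omega⟩
        rw [show i + i = 2*i from by ring, show 2*(i+a)+1 - 2*i = 2*a+1 from by omega,
          kpDeg_even, kpDeg_odd, he2]
        ring
      · have him : i ≤ m := by omega
        obtain ⟨a, rfl⟩ : ∃ a, m = i + a := ⟨m - i, by omega⟩
        rw [show 2*(i+a)+1 - (2*i+1) = 2*a from by omega, kpDeg_odd, kpDeg_even, he2]
        ring
    have hrefl : ∑ j ∈ Finset.range (2*m+2), kpDeg (e+3) d₁ (2*m+1 - j)
        = ∑ j ∈ Finset.range (2*m+2), kpDeg (e+3) d₁ j := by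
      have h := Finset.sum_range_reflect (fun j => kpDeg (e+3) d₁ j) (2*m+2)
      rw [← h]
      rfl
    have hKlb : ∀ j ∈ Finset.range (2*m+2),
        j/2 + (if j % 2 = 0 then 3 else 0) ≤ kpDeg (e+3) d₁ j := by
      intro j _
      unfold kpDeg
      have h5 : j/2 ≤ j/2*(e+1) := Nat.le_mul_of_pos_right _ (by omega)
      by_cases h : j % 2 = 0 <;> simp [h, he2] <;> omega
    have hS : m*(m+1) + 3*(m+1) ≤
        ∑ j ∈ (Finset.range (2*m+2)).filter
          (fun j => kpDeg (e+3) d₁ j + kpDeg (e+3) d₁ (2*m+1 - j) = kpDeg (e+3) d₁ (2*m+3) + 2),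
          kpDeg (e+3) d₁ (2*m+1 - j) := by
      rw [Finset.filter_true_of_mem hall, hrefl, ← sum_halves m]
      exact Finset.sum_le_sum hKlb
    have hk2 : m + 2 ≤ kpDeg (e+3) d₁ (2*m+3) + 1 := by
      rw [show 2*m+3 = 2*(m+1)+1 from by ring, kpDeg_odd, he2]
      have h5 : m+1 ≤ (m+1)*(e+1) := Nat.le_mul_of_pos_right _ (by omega)
      omega
    have hfin : (2*m+3)*(2*m+2) ≤ (m+2) * (m*(m+1) + 3*(m+1)) := by nlinarith [Nat.zero_le (m*m*m), Nat.zero_le (m*m)]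
    exact le_trans hfin (Nat.mul_le_mul hk2 hS)

lemma derivative_coeff_nonneg {p : Polynomial ℝ} (hp : ∀ k, 0 ≤ p.coeff k) :
    ∀ k, 0 ≤ (Polynomial.derivative p).coeff k := by
  intro k
  rw [Polynomial.coeff_derivative]
  exact mul_nonneg (hp _) (by positivity)

lemma mul_coeff_nonneg {p q : Polynomial ℝ} (hp : ∀ k, 0 ≤ p.coeff k)
    (hq : ∀ k, 0 ≤ q.coeff k) : ∀ k, 0 ≤ (p * q).coeff k := by
  intro k
  rw [Polynomial.coeff_mul]
  exact Finset.sum_nonneg fun x _ => mul_nonneg (hp _) (hq _)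

lemma coeff_mul_ge {p q : Polynomial ℝ} (hp : ∀ k, 0 ≤ p.coeff k) (hq : ∀ k, 0 ≤ q.coeff k)
    (a b : ℕ) : p.coeff a * q.coeff b ≤ (p * q).coeff (a + b) := by
  rw [Polynomial.coeff_mul]
  exact Finset.single_le_sum (f := fun x : ℕ × ℕ => p.coeff x.1 * q.coeff x.2)
    (fun i _ => mul_nonneg (hp _) (hq _))
    (Finset.HasAntidiagonal.mem_antidiagonal.mpr rfl : (a, b) ∈ Finset.HasAntidiagonal.antidiagonal (a + b))

end KPaux




/-- **Coefficient growth for the KP recursion, case `3d₀ ≥ 2d₁ + 2` (Lemma 3.4(i)).**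
For polynomials `uₙ` in `x` whose coefficients are real-analytic functions of `t`
with nonnegative Taylor coefficients at `t = 0`, satisfying the KP recursion,
if `u₀, u₁` have `x`-degrees `d₀, d₁` with `3d₀ ≥ 2d₁ + 2`, `d₀ ≥ 3`, and for all
`t > 0` the leading coefficients satisfy `c_{0,0}(t) > ε` and `c_{1,0}(t) > ε` for
some `0 < ε < 1`, then for all `n` and `t > 0`, `c_{2n,0}(t) > ε^{n+1}` and
`c_{2n+1,0}(t) > ε^{n+1}` (here `c_{2n,0}` is the coefficient of `x^{n(d₀-2)+d₀}`
in `u_{2n}` and `c_{2n+1,0}` that of `x^{n(d₀-2)+d₁}` in `u_{2n+1}`). -/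
theorem kp_recursion_leading_coeff_case_one
    (u : ℕ → ℝ → Polynomial ℝ)
    (hanalytic : ∀ n k, ∀ t : ℝ, AnalyticAt ℝ (fun s => (u n s).coeff k) t)
    (htaylor : ∀ n k m, 0 ≤ iteratedDeriv m (fun s => (u n s).coeff k) 0)
    (hrec : ∀ n : ℕ, ∀ t : ℝ, ∀ k : ℕ,
      ((n : ℝ) + 2) * ((n : ℝ) + 1) * (u (n + 2) t).coeff k =
        (Polynomial.derivative (Polynomial.derivative (Polynomial.derivative
            (Polynomial.derivative (u n t))))).coeff k
          + (∑ j ∈ Finset.range (n + 1),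
              Polynomial.derivative (u j t * Polynomial.derivative (u (n - j) t))).coeff k
          + deriv (fun s => (Polynomial.derivative (u n s)).coeff k) t)
    (d₀ d₁ : ℕ)
    (hdeg0 : ∀ t : ℝ, 0 < t → (u 0 t).natDegree = d₀)
    (hdeg1 : ∀ t : ℝ, 0 < t → (u 1 t).natDegree = d₁)
    (hcase : 2 * d₁ + 2 ≤ 3 * d₀) (hd₀ : 3 ≤ d₀)
    (ε : ℝ) (hε0 : 0 < ε) (hε1 : ε < 1)
    (hlead0 : ∀ t : ℝ, 0 < t → ε < (u 0 t).coeff d₀)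
    (hlead1 : ∀ t : ℝ, 0 < t → ε < (u 1 t).coeff d₁) :
    ∀ n : ℕ, ∀ t : ℝ, 0 < t →
      ε ^ (n + 1) < (u (2 * n) t).coeff (n * (d₀ - 2) + d₀)
        ∧ ε ^ (n + 1) < (u (2 * n + 1) t).coeff (n * (d₀ - 2) + d₁) := by
  -- coefficient functions are nonneg for t ≥ 0, with nonneg t-derivative
  have hnn : ∀ n k, ∀ t : ℝ, 0 ≤ t → 0 ≤ (u n t).coeff k := by
    intro n k t ht
    have h := KPaux.analytic_nonneg (hanalytic n k) (htaylor n k) t ht 0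
    simpa [iteratedDeriv_zero] using h
  have hdnn : ∀ n k, ∀ t : ℝ, 0 ≤ t → 0 ≤ deriv (fun s => (u n s).coeff k) t := by
    intro n k t ht
    have h := KPaux.analytic_nonneg (hanalytic n k) (htaylor n k) t ht 1
    simpa [iteratedDeriv_one] using h
  have key : ∀ n : ℕ, ∀ t : ℝ, 0 < t →
      ε ^ (n / 2 + 1) < (u n t).coeff (KPaux.kpDeg d₀ d₁ n) := by
    intro n
    induction n using Nat.strong_induction_on with
    | _ n IH =>
      rcases n with _ | _ | n
      · intro t ht
        simpa [KPaux.kpDeg] using hlead0 t ht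
      · intro t ht
        simpa [KPaux.kpDeg] using hlead1 t ht
      · intro t ht
        have hnn' : ∀ k, 0 ≤ (u n t).coeff k := fun k => hnn n k t ht.le
        have h0 := hrec n t (KPaux.kpDeg d₀ d₁ (n + 2))
        -- the three terms
        have hA : 0 ≤ (Polynomial.derivative (Polynomial.derivative (Polynomial.derivative
            (Polynomial.derivative (u n t))))).coeff (KPaux.kpDeg d₀ d₁ (n + 2)) :=
          KPaux.derivative_coeff_nonneg (KPaux.derivative_coeff_nonneg
            (KPaux.derivative_coeff_nonneg (KPaux.derivative_coeff_nonneg hnn'))) _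
        have hC : 0 ≤ deriv (fun s => (Polynomial.derivative (u n s)).coeff
            (KPaux.kpDeg d₀ d₁ (n + 2))) t := by
          have hfun : (fun s => (Polynomial.derivative (u n s)).coeff (KPaux.kpDeg d₀ d₁ (n + 2)))
              = fun s => (u n s).coeff (KPaux.kpDeg d₀ d₁ (n + 2) + 1)
                  * ((KPaux.kpDeg d₀ d₁ (n + 2) : ℝ) + 1) := by
            funext s
            rw [Polynomial.coeff_derivative]
          rw [hfun, deriv_mul_const (hanalytic n (KPaux.kpDeg d₀ d₁ (n + 2) + 1) t).differentiableAt]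
          exact mul_nonneg (hdnn n _ t ht.le) (by positivity)
        have hTnn : ∀ j, 0 ≤ (Polynomial.derivative
            (u j t * Polynomial.derivative (u (n - j) t))).coeff (KPaux.kpDeg d₀ d₁ (n + 2)) :=
          fun j => KPaux.derivative_coeff_nonneg
            (KPaux.mul_coeff_nonneg (fun k => hnn j k t ht.le)
              (KPaux.derivative_coeff_nonneg (fun k => hnn (n - j) k t ht.le))) _
        -- the candidate set
        set V := (Finset.range (n + 1)).filter
          (fun j => KPaux.kpDeg d₀ d₁ j + KPaux.kpDeg d₀ d₁ (n - j)
            = KPaux.kpDeg d₀ d₁ (n + 2) + 2) with hVdef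
        have hnV : n ∈ V := by
          refine Finset.mem_filter.mpr ⟨Finset.mem_range.mpr (by omega), ?_⟩
          rw [Nat.sub_self, KPaux.kpDeg_zero, KPaux.kpDeg_step]
          omega
        -- strict termwise bound when the weight is positive
        have hterm' : ∀ j ∈ V, 1 ≤ KPaux.kpDeg d₀ d₁ (n - j) →
            ((KPaux.kpDeg d₀ d₁ (n - j) * (KPaux.kpDeg d₀ d₁ (n + 2) + 1) : ℕ) : ℝ)
              * ε ^ (n / 2 + 2)
            < (Polynomial.derivative (u j t * Polynomial.derivative (u (n - j) t))).coeff
                (KPaux.kpDeg d₀ d₁ (n + 2)) := by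
          intro j hj hw1
          obtain ⟨hjr, hjeq⟩ := Finset.mem_filter.mp hj
          have hjn : j < n + 1 := Finset.mem_range.mp hjr
          have hIH1 := IH j (by omega) t ht
          have hIH2 := IH (n - j) (by omega) t ht
          have hT : (Polynomial.derivative (u j t * Polynomial.derivative (u (n - j) t))).coeff
                (KPaux.kpDeg d₀ d₁ (n + 2))
              = (u j t * Polynomial.derivative (u (n - j) t)).coeff
                  (KPaux.kpDeg d₀ d₁ (n + 2) + 1) * ((KPaux.kpDeg d₀ d₁ (n + 2) : ℝ) + 1) := by
            rw [Polynomial.coeff_derivative]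
          have hidx : KPaux.kpDeg d₀ d₁ j + (KPaux.kpDeg d₀ d₁ (n - j) - 1)
              = KPaux.kpDeg d₀ d₁ (n + 2) + 1 := by omega
          have hp1 : (u j t).coeff (KPaux.kpDeg d₀ d₁ j)
                * (Polynomial.derivative (u (n - j) t)).coeff (KPaux.kpDeg d₀ d₁ (n - j) - 1)
              ≤ (u j t * Polynomial.derivative (u (n - j) t)).coeff
                  (KPaux.kpDeg d₀ d₁ (n + 2) + 1) := by
            rw [← hidx]
            exact KPaux.coeff_mul_ge (fun k => hnn j k t ht.le)
              (KPaux.derivative_coeff_nonneg (fun k => hnn (n - j) k t ht.le)) _ _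
          have hdc : (Polynomial.derivative (u (n - j) t)).coeff (KPaux.kpDeg d₀ d₁ (n - j) - 1)
              = (u (n - j) t).coeff (KPaux.kpDeg d₀ d₁ (n - j))
                  * ((KPaux.kpDeg d₀ d₁ (n - j) : ℝ)) := by
            rw [Polynomial.coeff_derivative, show KPaux.kpDeg d₀ d₁ (n - j) - 1 + 1
              = KPaux.kpDeg d₀ d₁ (n - j) from by omega]
            congr 1
            rw [Nat.cast_sub hw1, Nat.cast_one]
            ring
          have h1 : ε ^ (n / 2 + 2) < (u j t).coeff (KPaux.kpDeg d₀ d₁ j)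
              * (u (n - j) t).coeff (KPaux.kpDeg d₀ d₁ (n - j)) := by
            have h2 : ε ^ (n / 2 + 2) ≤ ε ^ (j / 2 + 1) * ε ^ ((n - j) / 2 + 1) := by
              rw [← pow_add]
              exact pow_le_pow_of_le_one hε0.le hε1.le (by omega)
            have h3 : ε ^ (j / 2 + 1) * ε ^ ((n - j) / 2 + 1)
                < (u j t).coeff (KPaux.kpDeg d₀ d₁ j)
                  * (u (n - j) t).coeff (KPaux.kpDeg d₀ d₁ (n - j)) :=
              mul_lt_mul'' hIH1 hIH2 (pow_pos hε0 _).le (pow_pos hε0 _).le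
            linarith
          have hwpos : (0 : ℝ) < (KPaux.kpDeg d₀ d₁ (n - j) : ℝ)
              * ((KPaux.kpDeg d₀ d₁ (n + 2) : ℝ) + 1) := by
            have : (1 : ℝ) ≤ (KPaux.kpDeg d₀ d₁ (n - j) : ℝ) := by exact_mod_cast hw1
            positivity
          calc ((KPaux.kpDeg d₀ d₁ (n - j) * (KPaux.kpDeg d₀ d₁ (n + 2) + 1) : ℕ) : ℝ)
                * ε ^ (n / 2 + 2)
              = ε ^ (n / 2 + 2) * ((KPaux.kpDeg d₀ d₁ (n - j) : ℝ)
                  * ((KPaux.kpDeg d₀ d₁ (n + 2) : ℝ) + 1)) := by push_cast; ring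
            _ < ((u j t).coeff (KPaux.kpDeg d₀ d₁ j)
                  * (u (n - j) t).coeff (KPaux.kpDeg d₀ d₁ (n - j)))
                * ((KPaux.kpDeg d₀ d₁ (n - j) : ℝ)
                  * ((KPaux.kpDeg d₀ d₁ (n + 2) : ℝ) + 1)) :=
                mul_lt_mul_of_pos_right h1 hwpos
            _ = ((u j t).coeff (KPaux.kpDeg d₀ d₁ j)
                  * ((u (n - j) t).coeff (KPaux.kpDeg d₀ d₁ (n - j))
                    * (KPaux.kpDeg d₀ d₁ (n - j) : ℝ)))
                * ((KPaux.kpDeg d₀ d₁ (n + 2) : ℝ) + 1) := by ring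
            _ ≤ (u j t * Polynomial.derivative (u (n - j) t)).coeff
                  (KPaux.kpDeg d₀ d₁ (n + 2) + 1) * ((KPaux.kpDeg d₀ d₁ (n + 2) : ℝ) + 1) := by
                apply mul_le_mul_of_nonneg_right _ (by positivity)
                rw [← hdc]
                exact hp1
            _ = _ := hT.symm
        have hterm : ∀ j ∈ V,
            ((KPaux.kpDeg d₀ d₁ (n - j) * (KPaux.kpDeg d₀ d₁ (n + 2) + 1) : ℕ) : ℝ)
              * ε ^ (n / 2 + 2)
            ≤ (Polynomial.derivative (u j t * Polynomial.derivative (u (n - j) t))).coeff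
                (KPaux.kpDeg d₀ d₁ (n + 2)) := by
          intro j hj
          rcases Nat.eq_zero_or_pos (KPaux.kpDeg d₀ d₁ (n - j)) with hw0 | hw1
          · rw [hw0]
            simpa using hTnn j
          · exact (hterm' j hj hw1).le
        -- the strict sum bound
        have hsumlt : ∑ j ∈ V, ((KPaux.kpDeg d₀ d₁ (n - j)
              * (KPaux.kpDeg d₀ d₁ (n + 2) + 1) : ℕ) : ℝ) * ε ^ (n / 2 + 2)
            < ∑ j ∈ V, (Polynomial.derivative
                (u j t * Polynomial.derivative (u (n - j) t))).coeff
                  (KPaux.kpDeg d₀ d₁ (n + 2)) := by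
          refine Finset.sum_lt_sum hterm ⟨n, hnV, ?_⟩
          apply hterm' n hnV
          rw [Nat.sub_self, KPaux.kpDeg_zero]
          omega
        -- relate to the full sum B
        have hBV : ∑ j ∈ V, (Polynomial.derivative
              (u j t * Polynomial.derivative (u (n - j) t))).coeff (KPaux.kpDeg d₀ d₁ (n + 2))
            ≤ (∑ j ∈ Finset.range (n + 1),
                Polynomial.derivative (u j t * Polynomial.derivative (u (n - j) t))).coeff
                  (KPaux.kpDeg d₀ d₁ (n + 2)) := by
          rw [Polynomial.finset_sum_coeff]
          exact Finset.sum_le_sum_of_subset_of_nonneg (Finset.filter_subset _ _)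
            (fun j _ _ => hTnn j)
        -- the weight bound
        have hW := KPaux.weight_bound d₀ d₁ n hd₀
        have hcastsum : ∑ j ∈ V, ((KPaux.kpDeg d₀ d₁ (n - j)
              * (KPaux.kpDeg d₀ d₁ (n + 2) + 1) : ℕ) : ℝ) * ε ^ (n / 2 + 2)
            = (((KPaux.kpDeg d₀ d₁ (n + 2) + 1) * ∑ j ∈ V, KPaux.kpDeg d₀ d₁ (n - j) : ℕ) : ℝ)
              * ε ^ (n / 2 + 2) := by
          rw [← Finset.sum_mul]
          congr 1
          push_cast
          rw [Finset.mul_sum]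
          exact Finset.sum_congr rfl fun j _ => by ring
        have hchain : (((n + 2) * (n + 1) : ℕ) : ℝ) * ε ^ (n / 2 + 2)
            < ((n : ℝ) + 2) * ((n : ℝ) + 1) * (u (n + 2) t).coeff (KPaux.kpDeg d₀ d₁ (n + 2)) := by
          have hle : (((n + 2) * (n + 1) : ℕ) : ℝ) * ε ^ (n / 2 + 2)
              ≤ (((KPaux.kpDeg d₀ d₁ (n + 2) + 1) * ∑ j ∈ V, KPaux.kpDeg d₀ d₁ (n - j) : ℕ) : ℝ)
                * ε ^ (n / 2 + 2) :=
            mul_le_mul_of_nonneg_right (by exact_mod_cast hW) (by positivity)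
          rw [h0]
          calc (((n + 2) * (n + 1) : ℕ) : ℝ) * ε ^ (n / 2 + 2)
              ≤ _ := hle
            _ = ∑ j ∈ V, ((KPaux.kpDeg d₀ d₁ (n - j)
                  * (KPaux.kpDeg d₀ d₁ (n + 2) + 1) : ℕ) : ℝ) * ε ^ (n / 2 + 2) := hcastsum.symm
            _ < ∑ j ∈ V, (Polynomial.derivative
                  (u j t * Polynomial.derivative (u (n - j) t))).coeff
                    (KPaux.kpDeg d₀ d₁ (n + 2)) := hsumlt
            _ ≤ _ := by
                have := hBV
                linarith [hA, hC]
        have hpos : (0 : ℝ) < ((n : ℝ) + 2) * ((n : ℝ) + 1) := by positivity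
        have hcast2 : (((n + 2) * (n + 1) : ℕ) : ℝ) = ((n : ℝ) + 2) * ((n : ℝ) + 1) := by
          push_cast; ring
        rw [hcast2] at hchain
        have hlt := (mul_lt_mul_iff_right₀ hpos).mp hchain
        rw [show (n + 2) / 2 + 1 = n / 2 + 2 from by omega]
        exact hlt
  intro n t ht
  constructor
  · have h := key (2 * n) t ht
    rw [KPaux.kpDeg_even] at h
    rw [show n + 1 = 2 * n / 2 + 1 from by omega]
    exact h
  · have h := key (2 * n + 1) t ht
    rw [KPaux.kpDeg_odd] at h
    rw [show n + 1 = (2 * n + 1) / 2 + 1 from by omega]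
    exact h
end

section
/- Let (uₙ)_{n≥0} be a sequence of polynomials in x whose coefficients are real-analytic functions of t with all Taylor coefficients about t = 0 nonnegative, satisfying the KP recursion (n+2)(n+1) u_{n+2} = ∂⁴uₙ/∂x⁴ + Σ_{j=0}^{n} ∂/∂x (u_j · ∂u_{n−j}/∂x) + ∂²uₙ/∂t∂x. Suppose u₁ = 0, u₀ has x-degree d₀ ≥ 3, and for some 0 < ε < 1 the leading x-coefficient of u₀ satisfies c_{0,0}(t) > ε for all t > 0. Then for all n ≥ 0 and all t > 0, the leading x-coefficient of u_{2n} satisfies c_{2n,0}(t) > ε^{n+1}. -/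
open Polynomial Finset

private lemma sum_even_aux (f : ℕ → ℝ) (hodd : ∀ i, f (2*i+1) = 0) (n : ℕ) :
    ∑ j ∈ Finset.range (2*n+1), f j = ∑ i ∈ Finset.range (n+1), f (2*i) := by
  induction n with
  | zero => simp
  | succ n ih =>
    have h1 : 2*(n+1)+1 = (2*n+1)+1+1 := by ring
    rw [h1, Finset.sum_range_succ, Finset.sum_range_succ, ih,
        Finset.sum_range_succ (fun i => f (2*i)) (n+1)]
    rw [hodd n]
    have h2 : 2*n+1+1 = 2*(n+1) := by ring
    rw [h2]
    ring

private lemma gauss_aux (m : ℕ) : 2 * ∑ i ∈ Finset.range (m+1), (i+3) = (m+1)*(m+6) := by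
  induction m with
  | zero => simp
  | succ m ih => rw [Finset.sum_range_succ, Nat.mul_add, ih]; ring

private lemma coeff_mul_top (p q : Polynomial ℝ) (a b : ℕ)
    (hp : ∀ a', a < a' → p.coeff a' = 0) (hq : ∀ b', b < b' → q.coeff b' = 0) :
    (p*q).coeff (a+b) = p.coeff a * q.coeff b := by
  rw [Polynomial.coeff_mul]
  apply Finset.sum_eq_single (a, b)
  · rintro ⟨x, y⟩ hxy hne
    rw [Finset.HasAntidiagonal.mem_antidiagonal] at hxy
    rcases lt_or_ge a x with h | h
    · rw [hp x h, zero_mul]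
    · by_cases hb : y ≤ b
      · have hx : x = a := by omega
        have hy : y = b := by omega
        subst hx; subst hy; exact absurd rfl hne
      · rw [hq y (by omega), mul_zero]
  · intro h; simp [Finset.HasAntidiagonal.mem_antidiagonal] at h

section S1
variable (u : ℕ → ℝ → Polynomial ℝ)
    (hrec : ∀ n : ℕ, ∀ t : ℝ, ∀ k : ℕ,
      ((n : ℝ) + 2) * ((n : ℝ) + 1) * (u (n + 2) t).coeff k =
        (Polynomial.derivative (Polynomial.derivative (Polynomial.derivative
            (Polynomial.derivative (u n t))))).coeff k
          + (∑ j ∈ Finset.range (n + 1),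
              Polynomial.derivative (u j t * Polynomial.derivative (u (n - j) t))).coeff k
          + deriv (fun s => (Polynomial.derivative (u n s)).coeff k) t)
    (hu1 : ∀ t : ℝ, u 1 t = 0)

include hrec hu1 in
lemma odd_zero : ∀ i : ℕ, ∀ t : ℝ, u (2*i+1) t = 0 := by
  intro i
  induction i using Nat.strong_induction_on with
  | _ i ih =>
    rcases i with _ | m
    · simpa using hu1
    · intro t
      have key : ∀ k, (u (2*m+1+2) t).coeff k = 0 := by
        intro k
        have h := hrec (2*m+1) t k
        have hA : (derivative (derivative (derivative (derivative (u (2*m+1) t))))).coeff k = 0 := by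
          rw [ih m (by omega) t]; simp
        have hC : deriv (fun s => (derivative (u (2*m+1) s)).coeff k) t = 0 := by
          have hfun : (fun s => (derivative (u (2*m+1) s)).coeff k) = fun _ => (0:ℝ) := by
            funext s; rw [ih m (by omega) s]; simp
          rw [hfun, deriv_const]
        have hB : (∑ j ∈ Finset.range (2*m+1+1),
            derivative (u j t * derivative (u (2*m+1-j) t))).coeff k = 0 := by
          rw [Finset.sum_eq_zero, Polynomial.coeff_zero]
          intro j hj
          rw [Finset.mem_range] at hj
          rcases Nat.even_or_odd j with ⟨i2, hi2⟩ | ⟨i2, hi2⟩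
          · have hmj : 2*m+1-j = 2*(m-i2)+1 := by omega
            rw [hmj, ih (m-i2) (by omega) t]
            simp
          · rw [hi2, ih i2 (by omega) t]
            simp
        rw [hA, hB, hC] at h
        have hM : (((2*m+1:ℕ):ℝ)+2) * (((2*m+1:ℕ):ℝ)+1) ≠ 0 := by positivity
        have := (mul_eq_zero.mp (by linarith : (((2*m+1:ℕ):ℝ)+2) * (((2*m+1:ℕ):ℝ)+1) * (u (2*m+1+2) t).coeff k = 0)).resolve_left hM
        exact this
      have hidx : 2*(m+1)+1 = 2*m+1+2 := by omega
      rw [hidx]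
      exact Polynomial.ext fun k => by rw [key k, Polynomial.coeff_zero]
end S1

section S2
variable (u : ℕ → ℝ → Polynomial ℝ) (e : ℕ)
    (hrec : ∀ n : ℕ, ∀ t : ℝ, ∀ k : ℕ,
      ((n : ℝ) + 2) * ((n : ℝ) + 1) * (u (n + 2) t).coeff k =
        (Polynomial.derivative (Polynomial.derivative (Polynomial.derivative
            (Polynomial.derivative (u n t))))).coeff k
          + (∑ j ∈ Finset.range (n + 1),
              Polynomial.derivative (u j t * Polynomial.derivative (u (n - j) t))).coeff k
          + deriv (fun s => (Polynomial.derivative (u n s)).coeff k) t)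
    (hodd : ∀ i : ℕ, ∀ t : ℝ, u (2*i+1) t = 0)
    (hdeg0 : ∀ t : ℝ, 0 < t → (u 0 t).natDegree = e+3)

include hrec hodd hdeg0 in
lemma deg_bound : ∀ n : ℕ, ∀ t : ℝ, 0 < t → ∀ k : ℕ, n*(e+1)+(e+3) < k →
    (u (2*n) t).coeff k = 0 := by
  intro n
  induction n using Nat.strong_induction_on with
  | _ n ih =>
    rcases n with _ | m
    · intro t ht k hk
      apply Polynomial.coeff_eq_zero_of_natDegree_lt
      rw [hdeg0 t ht]; omega
    · intro t ht k hk
      have hsm : (m+1)*(e+1) = m*(e+1)+(e+1) := by ring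
      have h := hrec (2*m) t k
      have hA : (derivative (derivative (derivative (derivative (u (2*m) t))))).coeff k = 0 := by
        simp only [Polynomial.coeff_derivative]
        rw [ih m (by omega) t ht (k+1+1+1+1) (by linarith)]
        ring
      have hC : deriv (fun s => (derivative (u (2*m) s)).coeff k) t = 0 := by
        have hev : (fun s => (derivative (u (2*m) s)).coeff k) =ᶠ[nhds t] (fun _ => (0:ℝ)) := by
          filter_upwards [Ioi_mem_nhds ht] with s hs
          rw [Polynomial.coeff_derivative, ih m (by omega) s hs (k+1) (by linarith)]
          ring
        rw [hev.deriv_eq, deriv_const]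
      have hB : (∑ j ∈ Finset.range (2*m+1),
          derivative (u j t * derivative (u (2*m-j) t))).coeff k = 0 := by
        rw [Polynomial.finset_sum_coeff]
        apply Finset.sum_eq_zero
        intro j hj
        rw [Finset.mem_range] at hj
        rcases Nat.even_or_odd j with ⟨i2, hi2⟩ | ⟨i2, hi2⟩
        · have hji : j = 2*i2 := by omega
          have hmj : 2*m - 2*i2 = 2*(m-i2) := by omega
          rw [Polynomial.coeff_derivative, hji, hmj, Polynomial.coeff_mul]
          rw [Finset.sum_eq_zero, zero_mul]
          rintro ⟨a, b⟩ hab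
          rw [Finset.HasAntidiagonal.mem_antidiagonal] at hab
          dsimp only
          have hsplit : i2*(e+1) + (m-i2)*(e+1) = m*(e+1) := by
            rw [← add_mul]; congr 1; omega
          rcases le_or_gt a (i2*(e+1)+(e+3)) with ha | ha
          · have hb : (m-i2)*(e+1)+(e+3) < b + 1 := by linarith
            rw [Polynomial.coeff_derivative, ih (m-i2) (by omega) t ht (b+1) hb]
            ring
          · rw [ih i2 (by omega) t ht a ha, zero_mul]
        · rw [hi2, hodd i2 t]
          simp
      rw [hA, hB, hC] at h
      have hM : (((2*m:ℕ):ℝ)+2) * (((2*m:ℕ):ℝ)+1) ≠ 0 := by positivity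
      have h0 : (((2*m:ℕ):ℝ)+2) * (((2*m:ℕ):ℝ)+1) * (u (2*m+2) t).coeff k = 0 := by linarith
      have hidx : 2*(m+1) = 2*m+2 := by omega
      rw [hidx]
      exact (mul_eq_zero.mp h0).resolve_left hM
end S2

section S3
variable (u : ℕ → ℝ → Polynomial ℝ) (e : ℕ) (ε : ℝ)
    (hrec : ∀ n : ℕ, ∀ t : ℝ, ∀ k : ℕ,
      ((n : ℝ) + 2) * ((n : ℝ) + 1) * (u (n + 2) t).coeff k =
        (Polynomial.derivative (Polynomial.derivative (Polynomial.derivative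
            (Polynomial.derivative (u n t))))).coeff k
          + (∑ j ∈ Finset.range (n + 1),
              Polynomial.derivative (u j t * Polynomial.derivative (u (n - j) t))).coeff k
          + deriv (fun s => (Polynomial.derivative (u n s)).coeff k) t)
    (hodd : ∀ i : ℕ, ∀ t : ℝ, u (2*i+1) t = 0)
    (hdeg : ∀ n : ℕ, ∀ t : ℝ, 0 < t → ∀ k : ℕ, n*(e+1)+(e+3) < k →
      (u (2*n) t).coeff k = 0)
    (hε0 : 0 < ε)
    (hlead0 : ∀ t : ℝ, 0 < t → ε < (u 0 t).coeff (e+3))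

include hrec hodd hdeg hε0 hlead0 in
lemma main_aux : ∀ n : ℕ, ∀ t : ℝ, 0 < t →
    ε ^ (n+1) < (u (2*n) t).coeff (n*(e+1)+(e+3)) := by
  intro n
  induction n using Nat.strong_induction_on with
  | _ n ih =>
    rcases n with _ | m
    · intro t ht; simpa using hlead0 t ht
    · intro t ht
      set k : ℕ := (m+1)*(e+1)+(e+3) with hkdef
      have hsm : (m+1)*(e+1) = m*(e+1)+(e+1) := by ring
      have h := hrec (2*m) t k
      -- A term vanishes
      have hA : (derivative (derivative (derivative (derivative (u (2*m) t))))).coeff k = 0 := by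
        simp only [Polynomial.coeff_derivative]
        rw [hdeg m t ht (k+1+1+1+1) (by simp only [hkdef]; linarith)]
        ring
      -- C term vanishes
      have hC : deriv (fun s => (derivative (u (2*m) s)).coeff k) t = 0 := by
        have hev : (fun s => (derivative (u (2*m) s)).coeff k) =ᶠ[nhds t] (fun _ => (0:ℝ)) := by
          filter_upwards [Ioi_mem_nhds ht] with s hs
          rw [Polynomial.coeff_derivative, hdeg m s hs (k+1) (by simp only [hkdef]; linarith)]
          ring
        rw [hev.deriv_eq, deriv_const]
      -- B term computed
      have hsum : (∑ j ∈ Finset.range (2*m+1),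
          derivative (u j t * derivative (u (2*m-j) t))).coeff k
          = ∑ i ∈ Finset.range (m+1),
              (u (2*i) t).coeff (i*(e+1)+(e+3)) *
                (u (2*(m-i)) t).coeff ((m-i)*(e+1)+(e+3)) *
                ((((m-i)*(e+1)+(e+3):ℕ):ℝ)) * ((k:ℝ)+1) := by
        rw [Polynomial.finset_sum_coeff,
          sum_even_aux (fun j => (derivative (u j t * derivative (u (2*m-j) t))).coeff k)
            (fun i => by simp [hodd i t]) m]
        apply Finset.sum_congr rfl
        intro i hi
        rw [Finset.mem_range] at hi
        have hsplit : i*(e+1) + (m-i)*(e+1) = m*(e+1) := by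
          rw [← add_mul]; congr 1; omega
        rw [show 2*m-2*i = 2*(m-i) from by omega, Polynomial.coeff_derivative]
        have hab : k+1 = (i*(e+1)+(e+3)) + ((m-i)*(e+1)+(e+2)) := by
          simp only [hkdef]; linarith
        rw [hab, coeff_mul_top _ _ _ _
          (fun a' ha' => hdeg i t ht a' ha')
          (fun b' hb' => by
            rw [Polynomial.coeff_derivative, hdeg (m-i) t ht (b'+1) (by linarith)]
            ring),
          Polynomial.coeff_derivative]
        push_cast
        ring
      -- pointwise lower bound
      have hlow : ∀ i ∈ Finset.range (m+1),
          ε^(m+2) * ((((m-i)*(e+1)+(e+3):ℕ):ℝ)) * ((k:ℝ)+1) <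
          (u (2*i) t).coeff (i*(e+1)+(e+3)) *
            (u (2*(m-i)) t).coeff ((m-i)*(e+1)+(e+3)) *
            ((((m-i)*(e+1)+(e+3):ℕ):ℝ)) * ((k:ℝ)+1) := by
        intro i hi
        rw [Finset.mem_range] at hi
        have h1 := ih i (by omega) t ht
        have h2 := ih (m-i) (by omega) t ht
        have hpow : ε^(i+1) * ε^(m-i+1) = ε^(m+2) := by
          rw [← pow_add]; congr 1; omega
        have hcore : ε^(m+2) < (u (2*i) t).coeff (i*(e+1)+(e+3)) *
            (u (2*(m-i)) t).coeff ((m-i)*(e+1)+(e+3)) := by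
          rw [← hpow]
          exact mul_lt_mul'' h1 h2 (le_of_lt (pow_pos hε0 _)) (le_of_lt (pow_pos hε0 _))
        have hD : (0:ℝ) < (((m-i)*(e+1)+(e+3):ℕ):ℝ) := by
          have : 0 < (m-i)*(e+1)+(e+3) := Nat.lt_of_lt_of_le (by omega) (Nat.le_add_left _ _)
          exact_mod_cast this
        have hK : (0:ℝ) < (k:ℝ)+1 := by positivity
        have := mul_lt_mul_of_pos_right (mul_lt_mul_of_pos_right hcore hD) hK
        exact this
      -- strict sum inequality
      have hslt : ∑ i ∈ Finset.range (m+1),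
          ε^(m+2) * ((((m-i)*(e+1)+(e+3):ℕ):ℝ)) * ((k:ℝ)+1) <
          ∑ i ∈ Finset.range (m+1),
            (u (2*i) t).coeff (i*(e+1)+(e+3)) *
              (u (2*(m-i)) t).coeff ((m-i)*(e+1)+(e+3)) *
              ((((m-i)*(e+1)+(e+3):ℕ):ℝ)) * ((k:ℝ)+1) :=
        Finset.sum_lt_sum_of_nonempty (by simp) hlow
      -- LHS sum closed form
      have hrefl : ∑ i ∈ Finset.range (m+1), ((((m-i)*(e+1)+(e+3):ℕ):ℝ)) =
          ((∑ i ∈ Finset.range (m+1), (i*(e+1)+(e+3)) : ℕ) : ℝ) := by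
        push_cast
        have := Finset.sum_range_reflect (fun i => ((i*(e+1)+(e+3):ℕ):ℝ)) (m+1)
        simp only [Nat.add_sub_cancel] at this
        push_cast at this
        rw [← this]
      have hLHS : ∑ i ∈ Finset.range (m+1),
          ε^(m+2) * ((((m-i)*(e+1)+(e+3):ℕ):ℝ)) * ((k:ℝ)+1)
          = ε^(m+2) * ((k:ℝ)+1) *
            ((∑ i ∈ Finset.range (m+1), (i*(e+1)+(e+3)) : ℕ) : ℝ) := by
        rw [← hrefl, Finset.mul_sum]
        apply Finset.sum_congr rfl
        intro i _
        ring
      -- ℕ key inequality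
      have hkey : (2*m+2)*(2*m+1) ≤ (k+1) * ∑ i ∈ Finset.range (m+1), (i*(e+1)+(e+3)) := by
        have hle1 : ∀ i ∈ Finset.range (m+1), i+3 ≤ i*(e+1)+(e+3) := by
          intro i _
          have : i ≤ i*(e+1) := Nat.le_mul_of_pos_right i (by omega)
          exact add_le_add this (Nat.le_add_left 3 e)
        have h2 := Finset.sum_le_sum hle1
        have h3 := gauss_aux m
        have h4 : m+5 ≤ k+1 := by
          have : m+1 ≤ (m+1)*(e+1) := Nat.le_mul_of_pos_right (m+1) (by omega)
          simp only [hkdef]; omega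
        have h5 : 2*((2*m+2)*(2*m+1)) ≤ (m+5)*((m+1)*(m+6)) := by
          have hh : (m+5)*((m+1)*(m+6)) = 2*((2*m+2)*(2*m+1)) + (m*m*m + 4*(m*m) + 29*m + 26) := by ring
          rw [hh]; exact Nat.le_add_right _ _
        have h6 : (m+5)*((m+1)*(m+6)) ≤ (k+1)*(2*(∑ i ∈ Finset.range (m+1), (i*(e+1)+(e+3)))) := by
          rw [← h3]
          exact Nat.mul_le_mul h4 (Nat.mul_le_mul_left 2 h2)
        have h7 : 2*((2*m+2)*(2*m+1)) ≤ 2*((k+1) * ∑ i ∈ Finset.range (m+1), (i*(e+1)+(e+3))) := by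
          calc 2*((2*m+2)*(2*m+1)) ≤ (m+5)*((m+1)*(m+6)) := h5
            _ ≤ (k+1)*(2*(∑ i ∈ Finset.range (m+1), (i*(e+1)+(e+3)))) := h6
            _ = 2*((k+1) * ∑ i ∈ Finset.range (m+1), (i*(e+1)+(e+3))) := by ring
        omega
      -- assemble
      rw [hA, hC, hsum] at h
      have hM : (0:ℝ) < (((2*m:ℕ):ℝ)+2) * (((2*m:ℕ):ℝ)+1) := by positivity
      have hfinal : (((2*m:ℕ):ℝ)+2) * (((2*m:ℕ):ℝ)+1) * ε^(m+2) <
          (((2*m:ℕ):ℝ)+2) * (((2*m:ℕ):ℝ)+1) * (u (2*m+2) t).coeff k := by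
        rw [h]
        have hcast : (((2*m:ℕ):ℝ)+2) * (((2*m:ℕ):ℝ)+1) = (((2*m+2)*(2*m+1):ℕ):ℝ) := by
          push_cast; ring
        have hkeyR : (((2*m+2)*(2*m+1):ℕ):ℝ) ≤
            ((k:ℝ)+1) * ((∑ i ∈ Finset.range (m+1), (i*(e+1)+(e+3)) : ℕ) : ℝ) := by
          have := (Nat.cast_le (α := ℝ)).mpr hkey
          push_cast at this ⊢
          linarith
        have hε2 : (0:ℝ) < ε^(m+2) := pow_pos hε0 _
        calc (((2*m:ℕ):ℝ)+2) * (((2*m:ℕ):ℝ)+1) * ε^(m+2)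
            = (((2*m+2)*(2*m+1):ℕ):ℝ) * ε^(m+2) := by rw [hcast]
          _ ≤ (((k:ℝ)+1) * ((∑ i ∈ Finset.range (m+1), (i*(e+1)+(e+3)) : ℕ) : ℝ)) * ε^(m+2) := by
              exact mul_le_mul_of_nonneg_right hkeyR (le_of_lt hε2)
          _ = ε^(m+2) * ((k:ℝ)+1) * ((∑ i ∈ Finset.range (m+1), (i*(e+1)+(e+3)) : ℕ) : ℝ) := by ring
          _ = ∑ i ∈ Finset.range (m+1),
              ε^(m+2) * ((((m-i)*(e+1)+(e+3):ℕ):ℝ)) * ((k:ℝ)+1) := hLHS.symm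
          _ < ∑ i ∈ Finset.range (m+1),
              (u (2*i) t).coeff (i*(e+1)+(e+3)) *
                (u (2*(m-i)) t).coeff ((m-i)*(e+1)+(e+3)) *
                ((((m-i)*(e+1)+(e+3):ℕ):ℝ)) * ((k:ℝ)+1) := hslt
          _ = 0 + (∑ i ∈ Finset.range (m+1),
              (u (2*i) t).coeff (i*(e+1)+(e+3)) *
                (u (2*(m-i)) t).coeff ((m-i)*(e+1)+(e+3)) *
                ((((m-i)*(e+1)+(e+3):ℕ):ℝ)) * ((k:ℝ)+1)) + 0 := by ring
      have := lt_of_mul_lt_mul_left hfinal (le_of_lt hM)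
      rw [show 2*(m+1) = 2*m+2 from by ring]
      exact this
end S3


/-- **Coefficient growth for the KP recursion when `u₁ = 0` (Lemma 3.4(iii)).**
For polynomials `uₙ` in `x` whose coefficients are real-analytic functions of `t`
with nonnegative Taylor coefficients at `t = 0`, satisfying the KP recursion,
if `u₁ = 0`, `u₀` has `x`-degree `d₀ ≥ 3`, and for all `t > 0` the leading
coefficient of `u₀` satisfies `c_{0,0}(t) > ε` for some `0 < ε < 1`, then for all
`n` and `t > 0`, `c_{2n,0}(t) > ε^{n+1}` (here `c_{2n,0}` is the coefficient of
`x^{n(d₀-2)+d₀}` in `u_{2n}`). -/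
theorem kp_recursion_leading_coeff_u1_zero
    (u : ℕ → ℝ → Polynomial ℝ)
    (hanalytic : ∀ n k, ∀ t : ℝ, AnalyticAt ℝ (fun s => (u n s).coeff k) t)
    (htaylor : ∀ n k m, 0 ≤ iteratedDeriv m (fun s => (u n s).coeff k) 0)
    (hrec : ∀ n : ℕ, ∀ t : ℝ, ∀ k : ℕ,
      ((n : ℝ) + 2) * ((n : ℝ) + 1) * (u (n + 2) t).coeff k =
        (Polynomial.derivative (Polynomial.derivative (Polynomial.derivative
            (Polynomial.derivative (u n t))))).coeff k
          + (∑ j ∈ Finset.range (n + 1),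
              Polynomial.derivative (u j t * Polynomial.derivative (u (n - j) t))).coeff k
          + deriv (fun s => (Polynomial.derivative (u n s)).coeff k) t)
    (d₀ : ℕ)
    (hdeg0 : ∀ t : ℝ, 0 < t → (u 0 t).natDegree = d₀)
    (hu1 : ∀ t : ℝ, u 1 t = 0) (hd₀ : 3 ≤ d₀)
    (ε : ℝ) (hε0 : 0 < ε) (hε1 : ε < 1)
    (hlead0 : ∀ t : ℝ, 0 < t → ε < (u 0 t).coeff d₀) :
    ∀ n : ℕ, ∀ t : ℝ, 0 < t →
      ε ^ (n + 1) < (u (2 * n) t).coeff (n * (d₀ - 2) + d₀) := by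
  obtain ⟨e, rfl⟩ : ∃ e, d₀ = e + 3 := ⟨d₀ - 3, by omega⟩
  have hidx : e + 3 - 2 = e + 1 := by omega
  simp only [hidx]
  have hodd := odd_zero u hrec hu1
  have hdeg := deg_bound u e hrec hodd hdeg0
  exact main_aux u e ε hrec hodd hdeg hε0 hlead0
end

section
/- Let (uₙ)_{n≥0} be a sequence of polynomials in x whose coefficients are real-analytic functions of t with all Taylor coefficients about t = 0 nonnegative, satisfying the KP recursion (n+2)(n+1) u_{n+2} = ∂⁴uₙ/∂x⁴ + Σ_{j=0}^{n} ∂/∂x (u_j · ∂u_{n−j}/∂x) + ∂²uₙ/∂t∂x. Suppose u₀ = 0, u₁ has x-degree d₁ ≥ 3, and for some 0 < ε < 1 the leading x-coefficient of u₁ satisfies c_{1,0}(t) > ε for all t > 0. Then for all n ≥ 0 and all t > 0, the leading x-coefficient of u_{3n+1} satisfies c_{3n+1,0}(t) > ε^{n+1}. -/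
open Polynomial Finset
open scoped ENNReal



private lemma iterate_deriv_hasSeries {f : ℝ → ℝ} {p : FormalMultilinearSeries ℝ ℝ ℝ}
    {x : ℝ} {r : ℝ≥0∞} (h : HasFPowerSeriesOnBall f p x r) (m : ℕ) :
    ∃ q : FormalMultilinearSeries ℝ ℝ ℝ, HasFPowerSeriesOnBall (deriv^[m] f) q x r := by
  induction m with
  | zero => exact ⟨p, h⟩
  | succ m ih =>
    obtain ⟨q, hq⟩ := ih
    have h1 := (ContinuousLinearMap.apply ℝ ℝ (1 : ℝ)).comp_hasFPowerSeriesOnBall hq.fderiv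
    have h2 : deriv^[m+1] f
        = ⇑((ContinuousLinearMap.apply ℝ ℝ) (1 : ℝ)) ∘ (fderiv ℝ (deriv^[m] f)) := by
      funext y
      rw [Function.iterate_succ_apply']
      exact (fderiv_apply_one_eq_deriv).symm
    exact ⟨_, h2 ▸ h1⟩

private lemma absolutely_monotone {f : ℝ → ℝ} (hf : ∀ t : ℝ, AnalyticAt ℝ f t)
    (h0 : ∀ m, 0 ≤ iteratedDeriv m f 0) :
    ∀ t : ℝ, 0 ≤ t → ∀ m, 0 ≤ iteratedDeriv m f t := by
  have step : ∀ a : ℝ, (∀ m, 0 ≤ iteratedDeriv m f a) →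
      ∃ δ > (0:ℝ), ∀ y : ℝ, 0 ≤ y → y < δ → ∀ m, 0 ≤ iteratedDeriv m f (a + y) := by
    intro a ha
    obtain ⟨p, r, hpr⟩ := hf a
    obtain ⟨δ, -, h0δ, hδr⟩ := ENNReal.lt_iff_exists_real_btwn.mp hpr.r_pos
    have hδ0 : 0 < δ := ENNReal.ofReal_pos.mp (by simpa using h0δ)
    refine ⟨δ, hδ0, ?_⟩
    intro y hy0 hyδ m
    obtain ⟨q, hq⟩ := iterate_deriv_hasSeries hpr m
    have hy : y ∈ Metric.eball (0:ℝ) r := by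
      rw [Metric.mem_eball, edist_zero_right]
      calc (‖y‖₊ : ℝ≥0∞) = ENNReal.ofReal y := by
            rw [← enorm_eq_nnnorm, ← ofReal_norm, Real.norm_of_nonneg hy0]
        _ < ENNReal.ofReal δ := by
            exact (ENNReal.ofReal_lt_ofReal_iff hδ0).mpr hyδ
        _ < r := hδr
    have hs := hq.hasSum_iteratedFDeriv hy
    have hterm : ∀ n : ℕ,
        0 ≤ (n.factorial : ℝ)⁻¹ • iteratedFDeriv ℝ n (deriv^[m] f) a (fun _ => y) := by
      intro n
      have h1 : (fun _ : Fin n => y) = fun _ : Fin n => y • (1:ℝ) := by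
        funext i; simp
      rw [h1, (iteratedFDeriv ℝ n (deriv^[m] f) a).map_smul_univ]
      have h2 : iteratedFDeriv ℝ n (deriv^[m] f) a (fun _ => (1:ℝ))
          = iteratedDeriv n (deriv^[m] f) a := (iteratedDeriv_eq_iteratedFDeriv).symm
      rw [h2]
      have h3 : iteratedDeriv n (deriv^[m] f) a = iteratedDeriv (n + m) f a := by
        rw [iteratedDeriv_eq_iterate, iteratedDeriv_eq_iterate, Function.iterate_add_apply]
      rw [h3]
      have h4 : (0:ℝ) ≤ ∏ _i : Fin n, y := Finset.prod_nonneg fun _ _ => hy0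
      have h5 := ha (n + m)
      simp only [smul_eq_mul]
      positivity
    have hsum : 0 ≤ deriv^[m] f (a + y) := hasSum_le (fun n => hterm n) hasSum_zero hs
    rw [iteratedDeriv_eq_iterate]
    exact hsum
  intro T hT
  set B : Set ℝ := {t | t ∈ Set.Icc 0 T ∧ ∀ s ∈ Set.Icc 0 t, ∀ m, 0 ≤ iteratedDeriv m f s}
    with hBdef
  have h0B : (0:ℝ) ∈ B := by
    refine ⟨⟨le_refl _, hT⟩, fun s hs m => ?_⟩
    have : s = 0 := le_antisymm hs.2 hs.1
    rw [this]; exact h0 m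
  have hbdd : BddAbove B := ⟨T, fun t ht => ht.1.2⟩
  have hBne : B.Nonempty := ⟨0, h0B⟩
  set c := sSup B with hcdef
  have hc0 : 0 ≤ c := le_csSup hbdd h0B
  have hcT : c ≤ T := csSup_le hBne (fun t ht => ht.1.2)
  have hlt : ∀ s, 0 ≤ s → s < c → ∀ m, 0 ≤ iteratedDeriv m f s := by
    intro s hs0 hsc m
    obtain ⟨t, htB, hst⟩ := exists_lt_of_lt_csSup hBne hsc
    exact htB.2 s ⟨hs0, hst.le⟩ m
  have hcontm : ∀ m, ContinuousAt (iteratedDeriv m f) c := by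
    intro m
    have hA : AnalyticOnNhd ℝ f Set.univ := fun t _ => hf t
    have := (hA.iterated_deriv m) c (Set.mem_univ c)
    rw [iteratedDeriv_eq_iterate]
    exact this.continuousAt
  have hPc : ∀ m, 0 ≤ iteratedDeriv m f c := by
    rcases eq_or_lt_of_le hc0 with h | h
    · intro m; rw [← h]; exact h0 m
    · intro m
      have hcc : c ∈ closure (Set.Ico (0:ℝ) c) := by
        rw [closure_Ico (ne_of_lt h)]
        exact ⟨hc0, le_refl c⟩
      haveI hne : (nhdsWithin c (Set.Ico 0 c)).NeBot :=
        mem_closure_iff_nhdsWithin_neBot.mp hcc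
      refine ge_of_tendsto (((hcontm m).continuousWithinAt (s := Set.Ico (0:ℝ) c)).tendsto) ?_
      filter_upwards [self_mem_nhdsWithin] with s hs
      exact hlt s hs.1 hs.2 m
  have hcB : c ∈ B := by
    refine ⟨⟨hc0, hcT⟩, fun s hs m => ?_⟩
    rcases eq_or_lt_of_le hs.2 with h | h
    · rw [h]; exact hPc m
    · exact hlt s hs.1 h m
  have hcT' : c = T := by
    by_contra hne
    have hcT2 : c < T := lt_of_le_of_ne hcT hne
    obtain ⟨δ, hδ0, hprop⟩ := step c hPc
    set t' := min T (c + δ/2) with ht'def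
    have hct' : c < t' := lt_min hcT2 (by linarith)
    have ht'B : t' ∈ B := by
      refine ⟨⟨hc0.trans hct'.le, min_le_left _ _⟩, fun s hs m => ?_⟩
      rcases le_or_gt s c with h | h
      · exact hcB.2 s ⟨hs.1, h⟩ m
      · have hsc : s = c + (s - c) := by ring
        rw [hsc]
        refine hprop (s - c) (by linarith) ?_ m
        have : s ≤ c + δ/2 := hs.2.trans (min_le_right _ _)
        linarith
    have := le_csSup hbdd ht'B
    exact absurd this (not_le.mpr hct')
  intro m
  rw [← hcT']
  exact hPc m


private noncomputable def kpb : ℕ → ℝ := fun a => if a = 0 then (4:ℝ) else 5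

private lemma kpb_ge : ∀ a, (4:ℝ) ≤ kpb a := by
  intro a; unfold kpb; split <;> norm_num

private lemma kpb_le : ∀ a, kpb a ≤ (5:ℝ) := by
  intro a; unfold kpb; split <;> norm_num

private lemma kpb_pos : ∀ a, (0:ℝ) < kpb a := fun a => lt_of_lt_of_le (by norm_num) (kpb_ge a)

private lemma kp_key_ineq (n : ℕ) :
    20 * (3*(n:ℝ)+4) * (3*(n:ℝ)+3) ≤
      ((n:ℝ)+5) * ∑ a ∈ Finset.range (n+1),
        (((n-a : ℕ):ℝ)+3) * kpb a * kpb (n-a) := by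
  rcases Nat.eq_zero_or_pos n with rfl | hn
  · simp [kpb]; norm_num
  -- n ≥ 1
  have hsplit : ∀ a ∈ Finset.range (n+1),
      (((n-a : ℕ):ℝ)+3) * kpb a * kpb (n-a)
        = 25 * (((n-a : ℕ):ℝ)+3)
          - (if a = 0 then 5*((n:ℕ):ℝ)+15 else 0) - (if a = n then 15 else 0) := by
    intro a ha
    rw [Finset.mem_range] at ha
    rcases eq_or_ne a 0 with rfl | ha0
    · have hnn : n - 0 ≠ 0 := by omega
      simp only [kpb, if_pos rfl, if_neg hnn, if_neg (by omega : (0:ℕ) ≠ n), if_true]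
      simp only [Nat.sub_zero]
      ring
    · rcases eq_or_ne a n with rfl | han
      · simp only [kpb, if_neg ha0, Nat.sub_self, if_pos rfl]
        norm_num
      · have h1 : n - a ≠ 0 := by omega
        simp only [kpb, if_neg ha0, if_neg h1, if_neg han]
        ring
  rw [Finset.sum_congr rfl hsplit]
  rw [Finset.sum_sub_distrib, Finset.sum_sub_distrib]
  rw [Finset.sum_ite_eq' (Finset.range (n+1)) 0 (fun _ => 5*((n:ℕ):ℝ)+15),
      Finset.sum_ite_eq' (Finset.range (n+1)) n (fun _ => (15:ℝ))]
  rw [if_pos (Finset.mem_range.mpr (by omega)), if_pos (Finset.mem_range.mpr (by omega))]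
  rw [← Finset.mul_sum]
  have hsum1 : ∑ a ∈ Finset.range (n+1), (((n-a : ℕ):ℝ)+3)
      = ((∑ a ∈ Finset.range (n+1), (n-a) : ℕ) : ℝ) + 3*((n:ℝ)+1) := by
    rw [Finset.sum_add_distrib, Nat.cast_sum, Finset.sum_const, Finset.card_range]
    ring
  rw [hsum1]
  have hsum2 : ∑ a ∈ Finset.range (n+1), (n - a) = ∑ a ∈ Finset.range (n+1), a := by
    have := Finset.sum_range_reflect (fun j => j) (n+1)
    simpa using this
  have hsum3 : (∑ a ∈ Finset.range (n+1), a) * 2 = (n+1) * n := by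
    simpa using Finset.sum_range_id_mul_two (n+1)
  have hG : ((∑ a ∈ Finset.range (n+1), (n-a) : ℕ) : ℝ) * 2 = ((n:ℝ)+1) * n := by
    rw [hsum2]
    exact_mod_cast congrArg (fun x : ℕ => (x:ℝ)) hsum3
  set G : ℝ := ((∑ a ∈ Finset.range (n+1), (n-a) : ℕ) : ℝ) with hGdef
  have hn1 : (1:ℝ) ≤ (n:ℝ) := by exact_mod_cast hn
  have haux : (0:ℝ) ≤ 25*(n:ℝ)^2 - 45*(n:ℝ) + 30 := by nlinarith [sq_nonneg ((n:ℝ) - 1)]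
  nlinarith [mul_nonneg (sub_nonneg.mpr hn1) haux, hG]

/-- **Coefficient growth for the KP recursion when `u₀ = 0` (Lemma 3.4(iv)).**
For polynomials `uₙ` in `x` whose coefficients are real-analytic functions of `t`
with nonnegative Taylor coefficients at `t = 0`, satisfying the KP recursion,
if `u₀ = 0`, `u₁` has `x`-degree `d₁ ≥ 3`, and for all `t > 0` the leading
coefficient of `u₁` satisfies `c_{1,0}(t) > ε` for some `0 < ε < 1`, then for all
`n` and `t > 0`, `c_{3n+1,0}(t) > ε^{n+1}` (here `c_{3n+1,0}` is the coefficient of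
`x^{n(d₁-2)+d₁}` in `u_{3n+1}`). -/
theorem kp_recursion_leading_coeff_u0_zero
    (u : ℕ → ℝ → Polynomial ℝ)
    (hanalytic : ∀ n k, ∀ t : ℝ, AnalyticAt ℝ (fun s => (u n s).coeff k) t)
    (htaylor : ∀ n k m, 0 ≤ iteratedDeriv m (fun s => (u n s).coeff k) 0)
    (hrec : ∀ n : ℕ, ∀ t : ℝ, ∀ k : ℕ,
      ((n : ℝ) + 2) * ((n : ℝ) + 1) * (u (n + 2) t).coeff k =
        (Polynomial.derivative (Polynomial.derivative (Polynomial.derivative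
            (Polynomial.derivative (u n t))))).coeff k
          + (∑ j ∈ Finset.range (n + 1),
              Polynomial.derivative (u j t * Polynomial.derivative (u (n - j) t))).coeff k
          + deriv (fun s => (Polynomial.derivative (u n s)).coeff k) t)
    (d₁ : ℕ)
    (hdeg1 : ∀ t : ℝ, 0 < t → (u 1 t).natDegree = d₁)
    (hu0 : ∀ t : ℝ, u 0 t = 0) (hd₁ : 3 ≤ d₁)
    (ε : ℝ) (hε0 : 0 < ε) (hε1 : ε < 1)
    (hlead1 : ∀ t : ℝ, 0 < t → ε < (u 1 t).coeff d₁) :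
    ∀ n : ℕ, ∀ t : ℝ, 0 < t →
      ε ^ (n + 1) < (u (3 * n + 1) t).coeff (n * (d₁ - 2) + d₁) := by
  have hval : ∀ a i (t : ℝ), 0 ≤ t → 0 ≤ (u a t).coeff i := by
    intro a i t ht
    have := absolutely_monotone (hanalytic a i) (htaylor a i) t ht 0
    simpa [iteratedDeriv_zero] using this
  have hder : ∀ a i (t : ℝ), 0 ≤ t → 0 ≤ deriv (fun s => (u a s).coeff i) t := by
    intro a i t ht
    have := absolutely_monotone (hanalytic a i) (htaylor a i) t ht 1
    simpa [iteratedDeriv_one] using this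
  set e := d₁ - 2 with hedef
  have hd : d₁ = e + 2 := by omega
  have he1 : 1 ≤ e := by omega
  have main : ∀ n : ℕ, ∀ t : ℝ, 0 < t →
      kpb n * ε ^ (n + 1) < 4 * (u (3 * n + 1) t).coeff (n * e + d₁) := by
    intro n
    induction n using Nat.strong_induction_on with
    | _ n ih =>
      rcases n with _ | m
      · intro t ht
        simp only [kpb, if_pos rfl, Nat.mul_zero, Nat.zero_mul, Nat.zero_add, zero_add,
          pow_one]
        have := hlead1 t ht
        norm_num
        linarith
      · intro t ht
        set k : ℕ := (m+1)*e + d₁ with hkdef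
        have hrec' := hrec (3*m+2) t k
        have hidx : 3*m+2+2 = 3*(m+1)+1 := by omega
        rw [hidx] at hrec'
        have hcast : ((3*m+2 : ℕ) : ℝ) = 3*(m:ℝ)+2 := by push_cast; ring
        rw [hcast] at hrec'
        have hcoeffs : ∀ a i, 0 ≤ (u a t).coeff i := fun a i => hval a i t ht.le
        have hdnn : ∀ (p : Polynomial ℝ), (∀ i, 0 ≤ p.coeff i) → ∀ i,
            0 ≤ (Polynomial.derivative p).coeff i := by
          intro p hp i
          rw [Polynomial.coeff_derivative]
          exact mul_nonneg (hp _) (by positivity)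
        have hA : 0 ≤ (Polynomial.derivative (Polynomial.derivative (Polynomial.derivative
            (Polynomial.derivative (u (3*m+2) t))))).coeff k :=
          hdnn _ (hdnn _ (hdnn _ (hdnn _ (hcoeffs _)))) k
        have hC : 0 ≤ deriv (fun s => (Polynomial.derivative (u (3*m+2) s)).coeff k) t := by
          have heq : (fun s => (Polynomial.derivative (u (3*m+2) s)).coeff k)
              = fun s => (u (3*m+2) s).coeff (k+1) * ((k:ℝ)+1) := by
            funext s
            rw [Polynomial.coeff_derivative]
          rw [heq, deriv_mul_const_field]
          exact mul_nonneg (hder (3*m+2) (k+1) t ht.le) (by positivity)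
        have hB : (∑ j ∈ Finset.range (3*m+2+1),
              Polynomial.derivative (u j t * Polynomial.derivative (u (3*m+2-j) t))).coeff k
            = (∑ j ∈ Finset.range (3*m+2+1),
                (u j t * Polynomial.derivative (u (3*m+2-j) t)).coeff (k+1)) * ((k:ℝ)+1) := by
          rw [Polynomial.finset_sum_coeff, Finset.sum_mul]
          refine Finset.sum_congr rfl ?_
          intro j hj
          rw [Polynomial.coeff_derivative]
        rw [hB] at hrec'
        have hFnn : ∀ j, 0 ≤ (u j t * Polynomial.derivative (u (3*m+2-j) t)).coeff (k+1) := by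
          intro j
          rw [Polynomial.coeff_mul]
          exact Finset.sum_nonneg fun x _ => mul_nonneg (hcoeffs _ _) (hdnn _ (hcoeffs _) _)
        -- selected-term lower bound
        have hterm : ∀ a, a ≤ m →
            ((u (3*a+1) t).coeff (a*e+d₁) * (u (3*(m-a)+1) t).coeff ((m-a)*e+d₁))
                * (((m-a)*e+d₁ : ℕ) : ℝ)
              ≤ (u (3*a+1) t * Polynomial.derivative (u (3*(m-a)+1) t)).coeff (k+1) := by
          intro a ha
          rw [Polynomial.coeff_mul]
          have hmem : ((a*e+d₁ : ℕ), ((m+1-a)*e+1 : ℕ)) ∈ Finset.HasAntidiagonal.antidiagonal (k+1) := by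
            rw [Finset.HasAntidiagonal.mem_antidiagonal]
            have h1 : a*e + (m+1-a)*e = (m+1)*e := by
              rw [← Nat.add_mul, show a+(m+1-a) = m+1 from by omega]
            show a*e+d₁ + ((m+1-a)*e+1) = (m+1)*e + d₁ + 1
            rw [← h1]
            ring
          have hsingle := Finset.single_le_sum
            (f := fun x : ℕ × ℕ => (u (3*a+1) t).coeff x.1
              * (Polynomial.derivative (u (3*(m-a)+1) t)).coeff x.2)
            (fun x _ => mul_nonneg (hcoeffs _ _) (hdnn _ (hcoeffs _) _)) hmem
          refine le_trans (le_of_eq ?_) hsingle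
          simp only
          rw [Polynomial.coeff_derivative]
          have h2 : (m+1-a)*e + 1 + 1 = (m-a)*e + d₁ := by
            rw [show m+1-a = (m-a)+1 from by omega, hd]
            ring
          rw [h2]
          have h4 : (((m+1-a)*e + 1 : ℕ) : ℝ) + 1 = (((m-a)*e + d₁ : ℕ) : ℝ) := by
            rw [← h2]
            push_cast
            ring
          rw [h4]
          ring
        -- sum over image of a ↦ 3a+1
        have himgsub : (Finset.range (m+1)).image (fun a => 3*a+1)
            ⊆ Finset.range (3*m+2+1) := by
          intro j hj
          rw [Finset.mem_image] at hj
          obtain ⟨a, ha, rfl⟩ := hj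
          rw [Finset.mem_range] at *
          omega
        have himg : ∑ a ∈ Finset.range (m+1),
              (u (3*a+1) t * Polynomial.derivative (u (3*m+2-(3*a+1)) t)).coeff (k+1)
            ≤ ∑ j ∈ Finset.range (3*m+2+1),
              (u j t * Polynomial.derivative (u (3*m+2-j) t)).coeff (k+1) := by
          have him2 : ∑ j ∈ (Finset.range (m+1)).image (fun a => 3*a+1),
                (u j t * Polynomial.derivative (u (3*m+2-j) t)).coeff (k+1)
              = ∑ a ∈ Finset.range (m+1),
                (u (3*a+1) t * Polynomial.derivative (u (3*m+2-(3*a+1)) t)).coeff (k+1) :=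
            Finset.sum_image (fun a _ b _ h => by omega)
          rw [← him2]
          exact Finset.sum_le_sum_of_subset_of_nonneg himgsub (fun j _ _ => hFnn j)
        have hsub : ∀ a ∈ Finset.range (m+1), 3*m+2-(3*a+1) = 3*(m-a)+1 := by
          intro a ha
          rw [Finset.mem_range] at ha
          omega
        have hS34 : ∑ a ∈ Finset.range (m+1),
              (u (3*a+1) t * Polynomial.derivative (u (3*(m-a)+1) t)).coeff (k+1)
            = ∑ a ∈ Finset.range (m+1),
              (u (3*a+1) t * Polynomial.derivative (u (3*m+2-(3*a+1)) t)).coeff (k+1) :=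
          Finset.sum_congr rfl (fun a ha => by rw [hsub a ha])
        -- strict lower bound by induction hypothesis
        have hstrict : ∑ a ∈ Finset.range (m+1),
              ((kpb a/4*ε^(a+1)) * (kpb (m-a)/4*ε^(m-a+1))) * (((m-a)*e+d₁ : ℕ) : ℝ)
            < ∑ a ∈ Finset.range (m+1),
              ((u (3*a+1) t).coeff (a*e+d₁) * (u (3*(m-a)+1) t).coeff ((m-a)*e+d₁))
                * (((m-a)*e+d₁ : ℕ) : ℝ) := by
          refine Finset.sum_lt_sum_of_nonempty Finset.nonempty_range_add_one ?_
          intro a ha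
          rw [Finset.mem_range] at ha
          have hca : kpb a/4*ε^(a+1) < (u (3*a+1) t).coeff (a*e+d₁) := by
            have := ih a (by omega) t ht
            linarith
          have hcma : kpb (m-a)/4*ε^(m-a+1) < (u (3*(m-a)+1) t).coeff ((m-a)*e+d₁) := by
            have := ih (m-a) (by omega) t ht
            linarith
          have hz : (0:ℝ) < (((m-a)*e+d₁ : ℕ) : ℝ) := by
            exact_mod_cast Nat.lt_of_lt_of_le (show 0 < d₁ by omega) (Nat.le_add_left d₁ _)
          refine mul_lt_mul_of_pos_right ?_ hz
          exact mul_lt_mul'' hca hcma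
            (mul_nonneg (by linarith [kpb_pos a]) (by positivity))
            (mul_nonneg (by linarith [kpb_pos (m-a)]) (by positivity))
        have hexp : ∀ a, a ≤ m → ε^(a+1) * ε^(m-a+1) = ε^(m+2) := by
          intro a ha
          rw [← pow_add]
          congr 1
          omega
        have hT0 : (0:ℝ) ≤ ∑ a ∈ Finset.range (m+1), (((m-a : ℕ):ℝ)+3) * kpb a * kpb (m-a) := by
          refine Finset.sum_nonneg ?_
          intro a ha
          have h1 := kpb_pos a
          have h2 := kpb_pos (m-a)
          positivity
        have hS1 : ε^(m+2)/16 * ∑ a ∈ Finset.range (m+1), (((m-a : ℕ):ℝ)+3) * kpb a * kpb (m-a)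
            ≤ ∑ a ∈ Finset.range (m+1),
              ((kpb a/4*ε^(a+1)) * (kpb (m-a)/4*ε^(m-a+1))) * (((m-a)*e+d₁ : ℕ) : ℝ) := by
          rw [Finset.mul_sum]
          refine Finset.sum_le_sum ?_
          intro a ha
          rw [Finset.mem_range] at ha
          have hzz : (((m-a : ℕ):ℝ)+3) ≤ (((m-a)*e+d₁ : ℕ) : ℝ) := by
            have h1 : (m-a) + 3 ≤ (m-a)*e + d₁ :=
              Nat.add_le_add (Nat.le_mul_of_pos_right (m-a) (by omega)) hd₁
            exact_mod_cast h1
          have hab := mul_nonneg (kpb_pos a).le (kpb_pos (m-a)).le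
          calc ε^(m+2)/16 * ((((m-a : ℕ):ℝ)+3) * kpb a * kpb (m-a))
              = (ε^(m+2)/16 * (kpb a * kpb (m-a))) * (((m-a : ℕ):ℝ)+3) := by ring
            _ ≤ (ε^(m+2)/16 * (kpb a * kpb (m-a))) * (((m-a)*e+d₁ : ℕ) : ℝ) :=
                mul_le_mul_of_nonneg_left hzz (mul_nonneg (by positivity) hab)
            _ = ((kpb a/4*ε^(a+1)) * (kpb (m-a)/4*ε^(m-a+1))) * (((m-a)*e+d₁ : ℕ) : ℝ) := by
                rw [← hexp a (by omega)]
                ring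
        have hmid : ∑ a ∈ Finset.range (m+1),
              ((u (3*a+1) t).coeff (a*e+d₁) * (u (3*(m-a)+1) t).coeff ((m-a)*e+d₁))
                * (((m-a)*e+d₁ : ℕ) : ℝ)
            ≤ ∑ a ∈ Finset.range (m+1),
              (u (3*a+1) t * Polynomial.derivative (u (3*(m-a)+1) t)).coeff (k+1) :=
          Finset.sum_le_sum (fun a ha => hterm a (by rw [Finset.mem_range] at ha; omega))
        have hS5 : ε^(m+2)/16 * ∑ a ∈ Finset.range (m+1), (((m-a : ℕ):ℝ)+3) * kpb a * kpb (m-a)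
            < ∑ j ∈ Finset.range (3*m+2+1),
              (u j t * Polynomial.derivative (u (3*m+2-j) t)).coeff (k+1) := by
          have h6 := le_trans (le_of_eq hS34) himg
          linarith
        have hk5 : ((m:ℝ)+5) ≤ ((k:ℕ):ℝ)+1 := by
          have h1 : m+1 ≤ (m+1)*e := Nat.le_mul_of_pos_right (m+1) (by omega)
          have h2 : m+4 ≤ k := by
            rw [hkdef]
            exact le_trans (by omega) (Nat.add_le_add h1 hd₁)
          have h3 := (Nat.cast_le (α := ℝ)).mpr h2
          push_cast at h3
          linarith
        have hkey := kp_key_ineq m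
        have hR : (0:ℝ) < (3*(m:ℝ)+4) * (3*(m:ℝ)+3) := by positivity
        have hrec'' : (3*(m:ℝ)+4) * (3*(m:ℝ)+3) * (u (3*(m+1)+1) t).coeff k
            = (Polynomial.derivative (Polynomial.derivative (Polynomial.derivative
                (Polynomial.derivative (u (3*m+2) t))))).coeff k
              + (∑ j ∈ Finset.range (3*m+2+1),
                  (u j t * Polynomial.derivative (u (3*m+2-j) t)).coeff (k+1)) * (((k:ℕ):ℝ)+1)
              + deriv (fun s => (Polynomial.derivative (u (3*m+2) s)).coeff k) t := by
          linear_combination hrec'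
        have h7 : (ε^(m+2)/16 * ∑ a ∈ Finset.range (m+1), (((m-a : ℕ):ℝ)+3) * kpb a * kpb (m-a))
              * ((m:ℝ)+5)
            ≤ (ε^(m+2)/16 * ∑ a ∈ Finset.range (m+1), (((m-a : ℕ):ℝ)+3) * kpb a * kpb (m-a))
              * (((k:ℕ):ℝ)+1) :=
          mul_le_mul_of_nonneg_left hk5 (mul_nonneg (by positivity) hT0)
        have h8 : (ε^(m+2)/16 * ∑ a ∈ Finset.range (m+1), (((m-a : ℕ):ℝ)+3) * kpb a * kpb (m-a))
              * (((k:ℕ):ℝ)+1)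
            < (∑ j ∈ Finset.range (3*m+2+1),
                (u j t * Polynomial.derivative (u (3*m+2-j) t)).coeff (k+1)) * (((k:ℕ):ℝ)+1) := by
          refine mul_lt_mul_of_pos_right hS5 ?_
          have : (0:ℝ) ≤ ((k:ℕ):ℝ) := Nat.cast_nonneg k
          linarith
        have h9 : (ε^(m+2)/16) * (20 * (3*(m:ℝ)+4) * (3*(m:ℝ)+3))
            ≤ (ε^(m+2)/16) * (((m:ℝ)+5) * ∑ a ∈ Finset.range (m+1),
                (((m-a : ℕ):ℝ)+3) * kpb a * kpb (m-a)) :=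
          mul_le_mul_of_nonneg_left hkey (by positivity)
        have h10 : (3*(m:ℝ)+4) * (3*(m:ℝ)+3) * ((5/4) * ε^(m+2))
            < (3*(m:ℝ)+4) * (3*(m:ℝ)+3) * ((u (3*(m+1)+1) t).coeff k) := by
          nlinarith [h7, h8, h9, hA, hC, hrec'']
        have h11 : (5/4) * ε^(m+2) < (u (3*(m+1)+1) t).coeff k := (mul_lt_mul_iff_right₀ hR).mp h10
        have hkpb5 : kpb (m+1) = 5 := by simp [kpb]
        rw [hkpb5, show m+1+1 = m+2 from rfl]
        linarith

  intro n t ht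
  have h1 := main n t ht
  have h2 : (4:ℝ) * ε ^ (n+1) ≤ kpb n * ε ^ (n+1) :=
    mul_le_mul_of_nonneg_right (kpb_ge n) (by positivity)
  linarith
end
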